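/- arXiv:math/0602093 — 7 statements merged into one kernel-verified Lean document; each statement's English description precedes it below -/
import Mathlib

section
/- Let (Y,S,ν) be a measure-preserving dynamical system, f : Y → ℝ a measurable function, and suppose f∘S − f has an integrable majorant (i.e. there exists an integrable g with f∘S − f ≤ g ν-a.e.). Then f∘S − f is integrable and ∫_Y (f∘S − f) dν = 0. -/
open MeasureTheory Filter Topology

private lemma trunc_mono {n : ℝ} : Monotone (fun x : ℝ => max (min x n) (-n)) :=
  fun _ _ hab => max_le_max (min_le_min hab le_rfl) le_rfl

private lemma trunc_lip (n a b : ℝ) :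
    |max (min a n) (-n) - max (min b n) (-n)| ≤ |a - b| := by
  have h2 := abs_min_sub_min_le_max a n b n
  simp only [sub_self, abs_zero] at h2
  exact (abs_max_sub_max_le_abs _ _ _).trans (h2.trans (max_le le_rfl (abs_nonneg _)))

private lemma trunc_sub_le (n a b : ℝ) :
    max (min a n) (-n) - max (min b n) (-n) ≤ max (a - b) 0 := by
  rcases le_total a b with hab | hab
  · have := trunc_mono (n := n) hab
    simp only at this
    exact le_max_of_le_right (sub_nonpos.2 this)
  · exact le_max_of_le_left ((le_abs_self _).trans ((trunc_lip n a b).trans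
      (le_of_eq (abs_of_nonneg (sub_nonneg.2 hab)))))

/-- **Keller's zero-integral lemma.** If `(Y, S, ν)` is a measure-preserving dynamical
system, `f : Y → ℝ` is measurable, and the coboundary `f ∘ S - f` has an integrable
majorant, then `f ∘ S - f` is integrable and its integral vanishes. -/
theorem coboundary_integral_eq_zero_of_integrable_majorant
    {Y : Type*} [MeasurableSpace Y] (ν : Measure Y) [IsProbabilityMeasure ν]
    (S : Y → Y) (hS : MeasurePreserving S ν ν)
    (f : Y → ℝ) (hf : Measurable f)
    (g : Y → ℝ) (hg : Integrable g ν)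
    (hmaj : ∀ᵐ y ∂ν, f (S y) - f y ≤ g y) :
    Integrable (fun y => f (S y) - f y) ν ∧ (∫ y, (f (S y) - f y) ∂ν) = 0 := by
  set h : Y → ℝ := fun y => f (S y) - f y with hh
  have hmeas : Measurable h := (hf.comp hS.measurable).sub hf
  -- truncations
  set φ : ℕ → Y → ℝ := fun n y => max (min (f y) n) (-(n:ℝ)) with hφdef
  have hφmeas : ∀ n, Measurable (φ n) := fun n =>
    (hf.min measurable_const).max measurable_const
  have hφbd : ∀ n y, |φ n y| ≤ n := by
    intro n y
    rw [abs_le]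
    refine ⟨le_max_right _ _, max_le (min_le_right _ _) ?_⟩
    exact neg_le_self (Nat.cast_nonneg n)
  set hn : ℕ → Y → ℝ := fun n y => φ n (S y) - φ n y with hndef
  have hnmeas : ∀ n, Measurable (hn n) := fun n =>
    ((hφmeas n).comp hS.measurable).sub (hφmeas n)
  have hφint : ∀ n, Integrable (φ n) ν := by
    intro n
    refine (integrable_const ((n : ℝ))).mono' (hφmeas n).aestronglyMeasurable ?_
    exact ae_of_all _ fun y => by simpa using hφbd n y
  have hφSint : ∀ n, Integrable (fun y => φ n (S y)) ν := by
    intro n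
    refine (integrable_const ((n : ℝ))).mono'
      ((hφmeas n).comp hS.measurable).aestronglyMeasurable ?_
    exact ae_of_all _ fun y => by simpa using hφbd n (S y)
  have hnint : ∀ n, Integrable (hn n) ν := fun n => (hφSint n).sub (hφint n)
  -- integral of each truncated coboundary vanishes
  have hzero : ∀ n, ∫ y, hn n y ∂ν = 0 := by
    intro n
    have hmap : ∫ y, φ n (S y) ∂ν = ∫ y, φ n y ∂ν := by
      rw [← integral_map hS.measurable.aemeasurable (hφmeas n).aestronglyMeasurable,
        hS.map_eq]
    simp only [hndef]
    rw [integral_sub (hφSint n) (hφint n), hmap, sub_self]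
  -- pointwise bounds
  have habs : ∀ n y, |hn n y| ≤ |h y| := fun n y => trunc_lip n (f (S y)) (f y)
  have hle : ∀ n y, hn n y ≤ max (h y) 0 := fun n y => trunc_sub_le n (f (S y)) (f y)
  -- pointwise convergence
  have htend : ∀ y, Tendsto (fun n => hn n y) atTop (𝓝 (h y)) := by
    intro y
    refine Tendsto.congr' ?_ tendsto_const_nhds
    obtain ⟨N, hN⟩ := exists_nat_ge (max |f y| |f (S y)|)
    filter_upwards [eventually_ge_atTop N] with n hn'
    have hNn : (max |f y| |f (S y)|) ≤ (n : ℝ) := hN.trans (Nat.cast_le.2 hn')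
    have e1 : ∀ x : ℝ, |x| ≤ (n : ℝ) → max (min x n) (-(n:ℝ)) = x := by
      intro x hx
      rw [min_eq_left (le_trans (le_abs_self x) hx),
        max_eq_left (le_trans (neg_le_neg hx) (neg_abs_le x))]
    simp only [hndef, hφdef, hh]
    rw [e1 _ ((le_max_left _ _).trans hNn), e1 _ ((le_max_right _ _).trans hNn)]
  -- the majorant's positive part
  set G : Y → ℝ := fun y => max (g y) 0 with hGdef
  have hGint : Integrable G ν := hg.pos_part
  have hhG : ∀ᵐ y ∂ν, h y ≤ G y := by
    filter_upwards [hmaj] with y hy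
    exact hy.trans (le_max_left _ _)
  have hnG : ∀ n, ∀ᵐ y ∂ν, hn n y ≤ G y := by
    intro n
    filter_upwards [hmaj] with y hy
    exact (hle n y).trans (max_le_max hy le_rfl)
  -- Fatou argument: G - h has finite lintegral
  have hGhn_int : ∀ n, Integrable (fun y => G y - hn n y) ν :=
    fun n => hGint.sub (hnint n)
  have hGhn_val : ∀ n, ∫⁻ y, ENNReal.ofReal (G y - hn n y) ∂ν
      = ENNReal.ofReal (∫ y, G y ∂ν) := by
    intro n
    rw [← ofReal_integral_eq_lintegral_ofReal (hGhn_int n) ?_]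
    · rw [integral_sub hGint (hnint n), hzero n, sub_zero]
    · filter_upwards [hnG n] with y hy
      exact sub_nonneg.2 hy
  have hFatou : ∫⁻ y, ENNReal.ofReal (G y - h y) ∂ν ≤ ENNReal.ofReal (∫ y, G y ∂ν) := by
    have key : ∫⁻ y, ENNReal.ofReal (G y - h y) ∂ν
        ≤ liminf (fun n => ∫⁻ y, ENNReal.ofReal (G y - hn n y) ∂ν) atTop := by
      have hptwise : ∀ y, ENNReal.ofReal (G y - h y)
          = liminf (fun n => ENNReal.ofReal (G y - hn n y)) atTop := by
        intro y
        exact (((ENNReal.continuous_ofReal.tendsto _).comp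
          (tendsto_const_nhds.sub (htend y))).liminf_eq).symm
      calc ∫⁻ y, ENNReal.ofReal (G y - h y) ∂ν
          = ∫⁻ y, liminf (fun n => ENNReal.ofReal (G y - hn n y)) atTop ∂ν :=
            lintegral_congr fun y => hptwise y
        _ ≤ liminf (fun n => ∫⁻ y, ENNReal.ofReal (G y - hn n y) ∂ν) atTop :=
            lintegral_liminf_le' fun n =>
              (ENNReal.measurable_ofReal.comp_aemeasurable
                ((hg.aemeasurable.max aemeasurable_const).sub
                  (hnmeas n).aemeasurable))
      
    calc ∫⁻ y, ENNReal.ofReal (G y - h y) ∂ν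
        ≤ liminf (fun n => ∫⁻ y, ENNReal.ofReal (G y - hn n y) ∂ν) atTop := key
      _ = ENNReal.ofReal (∫ y, G y ∂ν) := by
          simp only [hGhn_val]; exact liminf_const _
  have hGh_int : Integrable (fun y => G y - h y) ν := by
    have hnn : 0 ≤ᵐ[ν] fun y => G y - h y := by
      filter_upwards [hhG] with y hy using sub_nonneg.2 hy
    refine ⟨hGint.aestronglyMeasurable.sub hmeas.aestronglyMeasurable, ?_⟩
    rw [hasFiniteIntegral_iff_ofReal hnn]
    exact lt_of_le_of_lt hFatou ENNReal.ofReal_lt_top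
  have hint : Integrable h ν := by
    have : Integrable (fun y => G y - (G y - h y)) ν := hGint.sub hGh_int
    simpa using this
  refine ⟨hint, ?_⟩
  -- dominated convergence
  have hDCT : Tendsto (fun n => ∫ y, hn n y ∂ν) atTop (𝓝 (∫ y, h y ∂ν)) := by
    refine tendsto_integral_of_dominated_convergence (fun y => |h y|)
      (fun n => (hnmeas n).aestronglyMeasurable) hint.abs
      (fun n => ae_of_all _ fun y => by simpa using habs n y)
      (ae_of_all _ htend)
  have : Tendsto (fun _ : ℕ => (0 : ℝ)) atTop (𝓝 (∫ y, h y ∂ν)) := by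
    simpa only [hzero] using hDCT
  exact tendsto_nhds_unique this tendsto_const_nhds
end

section
/- Suppose T is a quasiperiodically forced monotone interval map with differentiable fibre maps and continuous strictly positive fibre derivative, and for each θ the fibre map T_θ is strictly concave on an interval I(θ) = [γ⁻(θ), γ⁺(θ)] ⊆ X. Then there exist at most two T-invariant graphs φ with φ(θ) ∈ I(θ) for all θ; moreover if φ₁ ≤ φ₂ are two distinct such invariant graphs (distinct on a set of positive measure), then λ(φ₁) > 0 and λ(φ₂) < 0. -/
/-!
By ergodicity of the irrational rotation `R`, two invariant graphs that differ on a set of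
positive measure are ordered almost everywhere, say `φ < ψ`. For the log-gap
`g = log (ψ - φ)`, invariance makes `exp (g ∘ R - g)` the slope of `T θ` between `φ θ` and `ψ θ`,
which strict concavity places strictly between `DT θ (ψ θ)` and `DT θ (φ θ)`. Since `g` is
bounded above, the coboundary `g ∘ R - g` has integral zero, whence `λ(ψ) < 0 < λ(φ)`. So
distinct invariant graphs in the band have Lyapunov exponents of opposite signs, and no three
real numbers are pairwise of opposite signs.
-/

open Set MeasureTheory

/-- The circle 𝕋¹ = ℝ/ℤ. -/
abbrev Torus := AddCircle (1 : ℝ)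

instance : Fact ((0 : ℝ) < 1) := ⟨one_pos⟩

open Filter Real Topology

namespace MeasureTheory

variable {α : Type*} [MeasurableSpace α] {μ : Measure α}

theorem integral_lt_integral_of_ae_lt [NeZero μ] {f g : α → ℝ}
    (hf : Integrable f μ) (hg : Integrable g μ) (hfg : ∀ᵐ x ∂μ, f x < g x) :
    ∫ x, f x ∂μ < ∫ x, g x ∂μ := by
  rw [← sub_pos, ← integral_sub hg hf]
  refine (integral_pos_iff_support_of_nonneg_ae (hfg.mono fun x hx => (sub_pos.2 hx).le)
    (hg.sub hf)).2 (pos_iff_ne_zero.2 fun hnull => ?_)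
  obtain ⟨x, hx, hlt⟩ := ((measure_eq_zero_iff_ae_notMem.1 hnull).and hfg).exists
  exact hx (sub_ne_zero.2 hlt.ne')

theorem MeasurePreserving.integral_comp_sub_eq_zero_of_le [IsFiniteMeasure μ] {R : α → α}
    (hR : MeasurePreserving R μ μ) {f : α → ℝ} (hf : Measurable f) {K : ℝ} (hK : ∀ x, f x ≤ K)
    (hint : Integrable (fun x => f (R x) - f x) μ) : ∫ x, f (R x) - f x ∂μ = 0 := by
  -- The truncations `max f (-n)` are bounded, so their coboundaries integrate to zero, and they
  -- are dominated by `|f ∘ R - f|`.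
  set F : ℕ → α → ℝ := fun n x => max (f x) (-n)
  have hFmeas (n : ℕ) : Measurable (F n) := hf.max measurable_const
  have hFint (n : ℕ) : Integrable (F n) μ :=
    integrable_of_le_of_le (hFmeas n).aestronglyMeasurable
      (ae_of_all _ fun x => le_max_right (f x) _)
      (ae_of_all _ fun x => max_le_max_right _ (hK x)) (integrable_const _) (integrable_const _)
  have hF_zero (n : ℕ) : ∫ x, F n (R x) - F n x ∂μ = 0 := by
    have hFRint : Integrable (fun x => F n (R x)) μ := hR.integrable_comp_of_integrable (hFint n)
    rw [integral_sub hFRint (hFint n), sub_eq_zero,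
      ← integral_map hR.aemeasurable (hFmeas n).aestronglyMeasurable, hR.map_eq]
  have hF_tendsto (x : α) :
      Tendsto (fun n => F n (R x) - F n x) atTop (𝓝 (f (R x) - f x)) := by
    refine tendsto_const_nhds.congr' ?_
    filter_upwards [eventually_ge_atTop ⌈-f x⌉₊, eventually_ge_atTop ⌈-f (R x)⌉₊] with n hx hRx
    simp only [F]
    rw [max_eq_left (by linarith [Nat.ceil_le.1 hRx]), max_eq_left (by linarith [Nat.ceil_le.1 hx])]
  have hlim : Tendsto (fun n => ∫ x, F n (R x) - F n x ∂μ) atTop (𝓝 (∫ x, f (R x) - f x ∂μ)) :=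
    tendsto_integral_of_dominated_convergence (fun x => |f (R x) - f x|)
      (fun n => ((hFmeas n).comp hR.measurable |>.sub (hFmeas n)).aestronglyMeasurable)
      hint.abs (fun n => ae_of_all _ fun x => abs_max_sub_max_le_abs _ _ _)
      (ae_of_all _ hF_tendsto)
  simp only [hF_zero] at hlim
  exact tendsto_nhds_unique hlim tendsto_const_nhds

theorem integrable_comp_prodMk_of_continuous {X : Type*} [TopologicalSpace X] [CompactSpace X]
    [MeasurableSpace X] [OpensMeasurableSpace X] [SecondCountableTopology X] {μ : Measure X}
    [IsFiniteMeasure μ] {F : X × ℝ → ℝ} (hF : Continuous F) {φ : X → ℝ} (hφ : Measurable φ)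
    {a b : ℝ} (hφab : ∀ x, φ x ∈ Icc a b) : Integrable (fun x => F (x, φ x)) μ := by
  obtain ⟨C, hC⟩ := (isCompact_univ.prod isCompact_Icc : IsCompact (univ ×ˢ Icc a b))
    |>.exists_bound_of_continuousOn hF.continuousOn
  exact Integrable.of_bound (hF.measurable.comp (measurable_id.prodMk hφ)).aestronglyMeasurable C
    (ae_of_all _ fun x => hC _ ⟨mem_univ x, hφab x⟩)

end MeasureTheory

theorem zero_le_mul_or_zero_le_mul_or_zero_le_mul {R : Type*} [CommRing R] [LinearOrder R]
    [IsStrictOrderedRing R] (x y z : R) : 0 ≤ x * y ∨ 0 ≤ x * z ∨ 0 ≤ y * z := by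
  by_contra! h
  nlinarith [sq_nonneg (x * y * z), mul_pos_of_neg_of_neg h.1 h.2.1]

theorem StrictConcaveOn.log_slope_mem_Ioo {s : Set ℝ} {f : ℝ → ℝ} (hf : StrictConcaveOn ℝ s f)
    {x y a b : ℝ} (hx : x ∈ s) (hy : y ∈ s) (hxy : x < y) (hfx : HasDerivAt f a x)
    (hfy : HasDerivAt f b y) (hb : 0 < b) :
    log (f y - f x) - log (y - x) ∈ Ioo (log b) (log a) := by
  have hb_lt : b < (f y - f x) / (y - x) :=
    slope_def_field f x y ▸ hf.lt_slope_of_hasDerivAt hx hy hxy hfy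
  have hlt_a : (f y - f x) / (y - x) < a :=
    slope_def_field f x y ▸ hf.slope_lt_of_hasDerivAt hx hy hxy hfx
  have hfxy : 0 < f y - f x := (div_pos_iff_of_pos_right (sub_pos.2 hxy)).1 (hb.trans hb_lt)
  rw [← log_div hfxy.ne' (sub_pos.2 hxy).ne']
  exact ⟨log_lt_log hb hb_lt, log_lt_log (hb.trans hb_lt) hlt_a⟩

section InvariantGraph

variable {Ω : Type*} [MeasurableSpace Ω] {μ : Measure Ω} {R : Ω → Ω} {T DT : Ω → ℝ → ℝ}
  {I : Ω → Set ℝ} {a b : ℝ} {φ ψ : Ω → ℝ}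

def IsInvariantGraph (R : Ω → Ω) (T : Ω → ℝ → ℝ) (φ : Ω → ℝ) : Prop :=
  ∀ θ, T θ (φ θ) = φ (R θ)

noncomputable def lyapunovExponent (μ : Measure Ω) (DT : Ω → ℝ → ℝ) (φ : Ω → ℝ) : ℝ :=
  ∫ θ, log (DT θ (φ θ)) ∂μ

namespace IsInvariantGraph

theorem ae_lt_or_ae_le (hφ : IsInvariantGraph R T φ) (hψ : IsInvariantGraph R T ψ)
    (hR : Ergodic R μ) (hT : ∀ θ, StrictMono (T θ)) (hφm : Measurable φ) (hψm : Measurable ψ) :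
    (∀ᵐ θ ∂μ, φ θ < ψ θ) ∨ ∀ᵐ θ ∂μ, ψ θ ≤ φ θ := by
  have hinv : R ⁻¹' {θ | φ θ < ψ θ} = {θ | φ θ < ψ θ} := by
    ext θ
    simp only [mem_preimage, mem_ofPred_eq, ← hφ θ, ← hψ θ, (hT θ).lt_iff_lt]
  simpa only [mem_ofPred_eq, not_lt] using
    hR.ae_mem_or_ae_notMem (measurableSet_lt hφm hψm) hinv

theorem ae_lt_of_le_of_not_ae_eq (hφ : IsInvariantGraph R T φ) (hψ : IsInvariantGraph R T ψ)
    (hR : Ergodic R μ) (hT : ∀ θ, StrictMono (T θ)) (hφm : Measurable φ) (hψm : Measurable ψ)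
    (hle : ∀ θ, φ θ ≤ ψ θ) (hne : ¬φ =ᵐ[μ] ψ) : ∀ᵐ θ ∂μ, φ θ < ψ θ :=
  (hφ.ae_lt_or_ae_le hψ hR hT hφm hψm).resolve_right fun hge =>
    hne (hge.mono fun θ h => le_antisymm (hle θ) h)

theorem ae_lt_or_ae_gt_of_not_ae_eq (hφ : IsInvariantGraph R T φ) (hψ : IsInvariantGraph R T ψ)
    (hR : Ergodic R μ) (hT : ∀ θ, StrictMono (T θ)) (hφm : Measurable φ) (hψm : Measurable ψ)
    (hne : ¬φ =ᵐ[μ] ψ) : (∀ᵐ θ ∂μ, φ θ < ψ θ) ∨ ∀ᵐ θ ∂μ, ψ θ < φ θ :=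
  (hφ.ae_lt_or_ae_le hψ hR hT hφm hψm).imp_right fun hge =>
    (hψ.ae_lt_or_ae_le hφ hR hT hψm hφm).resolve_right fun hle =>
      hne ((hle.and hge).mono fun _ h => le_antisymm h.1 h.2)

end IsInvariantGraph

theorem lyapunovExponent_pos_and_neg_of_ae_lt [IsFiniteMeasure μ] [NeZero μ]
    (hR : MeasurePreserving R μ μ) (hderiv : ∀ θ x, HasDerivAt (T θ) (DT θ x) x)
    (hDTpos : ∀ θ x, 0 < DT θ x) (hconc : ∀ θ, StrictConcaveOn ℝ (I θ) (T θ))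
    (hI : ∀ θ, I θ ⊆ Icc a b) (hφm : Measurable φ) (hψm : Measurable ψ)
    (hφI : ∀ θ, φ θ ∈ I θ) (hψI : ∀ θ, ψ θ ∈ I θ)
    (hφ : IsInvariantGraph R T φ) (hψ : IsInvariantGraph R T ψ)
    (hφint : Integrable (fun θ => log (DT θ (φ θ))) μ)
    (hψint : Integrable (fun θ => log (DT θ (ψ θ))) μ) (hlt : ∀ᵐ θ ∂μ, φ θ < ψ θ) :
    0 < lyapunovExponent μ DT φ ∧ lyapunovExponent μ DT ψ < 0 := by
  set g : Ω → ℝ := fun θ => log (ψ θ - φ θ)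
  have hgm : Measurable g := (hψm.sub hφm).log
  have hpinch : ∀ᵐ θ ∂μ, g (R θ) - g θ ∈ Ioo (log (DT θ (ψ θ))) (log (DT θ (φ θ))) := by
    filter_upwards [hlt] with θ hθ
    simp only [g, ← hφ θ, ← hψ θ]
    exact (hconc θ).log_slope_mem_Ioo (hφI θ) (hψI θ) hθ (hderiv θ _) (hderiv θ _) (hDTpos θ _)
  have hcob_int : Integrable (fun θ => g (R θ) - g θ) μ :=
    integrable_of_le_of_le ((hgm.comp hR.measurable).sub hgm).aestronglyMeasurable
      (hpinch.mono fun _ h => h.1.le) (hpinch.mono fun _ h => h.2.le) hψint hφint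
  have hg_le (θ : Ω) : g θ ≤ b - a :=
    calc g θ = log |ψ θ - φ θ| := (log_abs _).symm
      _ ≤ |ψ θ - φ θ| := log_le_self (abs_nonneg _)
      _ ≤ b - a :=
        Real.dist_eq (ψ θ) (φ θ) ▸ Real.dist_le_of_mem_Icc (hI θ (hψI θ)) (hI θ (hφI θ))
  have hcob_zero := hR.integral_comp_sub_eq_zero_of_le hgm hg_le hcob_int
  constructor
  · have := integral_lt_integral_of_ae_lt hcob_int hφint (hpinch.mono fun _ h => h.2)
    rwa [hcob_zero] at this
  · have := integral_lt_integral_of_ae_lt hψint hcob_int (hpinch.mono fun _ h => h.1)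
    rwa [hcob_zero] at this

theorem lyapunovExponent_mul_neg_of_not_ae_eq [IsFiniteMeasure μ] [NeZero μ]
    (hR : Ergodic R μ) (hderiv : ∀ θ x, HasDerivAt (T θ) (DT θ x) x)
    (hDTpos : ∀ θ x, 0 < DT θ x) (hconc : ∀ θ, StrictConcaveOn ℝ (I θ) (T θ))
    (hI : ∀ θ, I θ ⊆ Icc a b) (hφm : Measurable φ) (hψm : Measurable ψ)
    (hφI : ∀ θ, φ θ ∈ I θ) (hψI : ∀ θ, ψ θ ∈ I θ)
    (hφ : IsInvariantGraph R T φ) (hψ : IsInvariantGraph R T ψ)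
    (hφint : Integrable (fun θ => log (DT θ (φ θ))) μ)
    (hψint : Integrable (fun θ => log (DT θ (ψ θ))) μ) (hne : ¬φ =ᵐ[μ] ψ) :
    lyapunovExponent μ DT φ * lyapunovExponent μ DT ψ < 0 := by
  have hT (θ : Ω) : StrictMono (T θ) := strictMono_of_hasDerivAt_pos (hderiv θ) (hDTpos θ)
  rcases hφ.ae_lt_or_ae_gt_of_not_ae_eq hψ hR hT hφm hψm hne with hlt | hgt
  · obtain ⟨hpos, hneg⟩ := lyapunovExponent_pos_and_neg_of_ae_lt hR.toMeasurePreserving hderiv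
      hDTpos hconc hI hφm hψm hφI hψI hφ hψ hφint hψint hlt
    exact mul_neg_of_pos_of_neg hpos hneg
  · obtain ⟨hpos, hneg⟩ := lyapunovExponent_pos_and_neg_of_ae_lt hR.toMeasurePreserving hderiv
      hDTpos hconc hI hψm hφm hψI hφI hψ hφ hψint hφint hgt
    exact mul_neg_of_neg_of_pos hneg hpos

end InvariantGraph

theorem concave_fibres_at_most_two_graphs_general
    (ω : ℝ) (hω : Irrational ω) (a b : ℝ)
    (T DT : Torus → ℝ → ℝ) (γm γp : Torus → ℝ)
    (hDTcont : Continuous fun p : Torus × ℝ => DT p.1 p.2)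
    (hDTpos : ∀ θ x, 0 < DT θ x)
    (hderiv : ∀ θ x, HasDerivAt (T θ) (DT θ x) x)
    (hγmem : ∀ θ, γm θ ∈ Icc a b ∧ γp θ ∈ Icc a b)
    (hconc : ∀ θ, StrictConcaveOn ℝ (Icc (γm θ) (γp θ)) (T θ)) :
    (∀ φ₁ φ₂ φ₃ : Torus → ℝ,
      Measurable φ₁ → Measurable φ₂ → Measurable φ₃ →
      (∀ θ, φ₁ θ ∈ Icc (γm θ) (γp θ)) →
      (∀ θ, φ₂ θ ∈ Icc (γm θ) (γp θ)) →
      (∀ θ, φ₃ θ ∈ Icc (γm θ) (γp θ)) →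
      (∀ θ, T θ (φ₁ θ) = φ₁ (θ + (ω : Torus))) →
      (∀ θ, T θ (φ₂ θ) = φ₂ (θ + (ω : Torus))) →
      (∀ θ, T θ (φ₃ θ) = φ₃ (θ + (ω : Torus))) →
      (φ₁ =ᵐ[volume] φ₂ ∨ φ₁ =ᵐ[volume] φ₃ ∨ φ₂ =ᵐ[volume] φ₃)) ∧
    (∀ φ₁ φ₂ : Torus → ℝ,
      Measurable φ₁ → Measurable φ₂ →
      (∀ θ, φ₁ θ ∈ Icc (γm θ) (γp θ)) →
      (∀ θ, φ₂ θ ∈ Icc (γm θ) (γp θ)) →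
      (∀ θ, T θ (φ₁ θ) = φ₁ (θ + (ω : Torus))) →
      (∀ θ, T θ (φ₂ θ) = φ₂ (θ + (ω : Torus))) →
      (∀ θ, φ₁ θ ≤ φ₂ θ) → ¬ (φ₁ =ᵐ[volume] φ₂) →
      (0 < ∫ θ : Torus, Real.log (DT θ (φ₁ θ))) ∧
        (∫ θ : Torus, Real.log (DT θ (φ₂ θ))) < 0) := by
  have hR : Ergodic (· + (ω : Torus)) := AddCircle.ergodic_add_right.2
    (AddCircle.denseRange_zsmul_iff.1 (AddCircle.denseRange_zsmul_coe_iff.2 (by simpa using hω)))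
  have hI (θ : Torus) : Icc (γm θ) (γp θ) ⊆ Icc a b := Icc_subset_Icc (hγmem θ).1.1 (hγmem θ).2.2
  have hint {φ : Torus → ℝ} (hφm : Measurable φ) (hφI : ∀ θ, φ θ ∈ Icc (γm θ) (γp θ)) :
      Integrable (fun θ => log (DT θ (φ θ))) :=
    integrable_comp_prodMk_of_continuous (hDTcont.log fun p => (hDTpos p.1 p.2).ne') hφm
      fun θ => hI θ (hφI θ)
  refine ⟨fun φ₁ φ₂ φ₃ h₁ h₂ h₃ h₁I h₂I h₃I hinv₁ hinv₂ hinv₃ => ?_,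
    fun φ₁ φ₂ h₁ h₂ h₁I h₂I hinv₁ hinv₂ hle hne =>
      lyapunovExponent_pos_and_neg_of_ae_lt hR.toMeasurePreserving hderiv hDTpos hconc hI h₁ h₂
        h₁I h₂I hinv₁ hinv₂ (hint h₁ h₁I) (hint h₂ h₂I)
        (IsInvariantGraph.ae_lt_of_le_of_not_ae_eq hinv₁ hinv₂ hR
          (fun θ => strictMono_of_hasDerivAt_pos (hderiv θ) (hDTpos θ)) h₁ h₂ hle hne)⟩
  have ae_eq_of_mul_nonneg {φ ψ : Torus → ℝ} (hφm : Measurable φ) (hψm : Measurable ψ)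
      (hφI : ∀ θ, φ θ ∈ Icc (γm θ) (γp θ)) (hψI : ∀ θ, ψ θ ∈ Icc (γm θ) (γp θ))
      (hφ : IsInvariantGraph (· + (ω : Torus)) T φ) (hψ : IsInvariantGraph (· + (ω : Torus)) T ψ)
      (hsign : 0 ≤ lyapunovExponent volume DT φ * lyapunovExponent volume DT ψ) : φ =ᵐ[volume] ψ :=
    not_not.1 fun hne => hsign.not_gt <| lyapunovExponent_mul_neg_of_not_ae_eq hR hderiv hDTpos
      hconc hI hφm hψm hφI hψI hφ hψ (hint hφm hφI) (hint hψm hψI) hne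
  rcases zero_le_mul_or_zero_le_mul_or_zero_le_mul (lyapunovExponent volume DT φ₁)
    (lyapunovExponent volume DT φ₂) (lyapunovExponent volume DT φ₃) with h | h | h
  · exact .inl (ae_eq_of_mul_nonneg h₁ h₂ h₁I h₂I hinv₁ hinv₂ h)
  · exact .inr (.inl (ae_eq_of_mul_nonneg h₁ h₃ h₁I h₃I hinv₁ hinv₃ h))
  · exact .inr (.inr (ae_eq_of_mul_nonneg h₂ h₃ h₂I h₃I hinv₂ hinv₃ h))

/-- **Keller's concavity theorem.** For a quasiperiodically forced C¹ monotone interval map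
whose fibre maps are strictly concave on a band `I(θ) = [γ⁻ θ, γ⁺ θ]`, there are at most two
invariant graphs taking values in the band (any three agree a.e. in pairs); moreover if
`φ₁ ≤ φ₂` are two such invariant graphs which are not a.e. equal, then the Lyapunov exponent
of `φ₁` is positive and that of `φ₂` is negative. -/
theorem concave_fibres_at_most_two_graphs
    (ω : ℝ) (hω : Irrational ω) (a b : ℝ) (hab : a ≤ b)
    (T DT : Torus → ℝ → ℝ) (γm γp : Torus → ℝ)
    (hmaps : ∀ θ, MapsTo (T θ) (Icc a b) (Icc a b))
    (hmono : ∀ θ, MonotoneOn (T θ) (Icc a b))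
    (hcont : Continuous fun p : Torus × ℝ => T p.1 p.2)
    (hDTcont : Continuous fun p : Torus × ℝ => DT p.1 p.2)
    (hDTpos : ∀ θ x, 0 < DT θ x)
    (hderiv : ∀ θ x, HasDerivAt (T θ) (DT θ x) x)
    (hγmeas : Measurable γm) (hγpmeas : Measurable γp)
    (hγmem : ∀ θ, γm θ ∈ Icc a b ∧ γp θ ∈ Icc a b)
    (hconc : ∀ θ, StrictConcaveOn ℝ (Icc (γm θ) (γp θ)) (T θ)) :
    (∀ φ₁ φ₂ φ₃ : Torus → ℝ,
      Measurable φ₁ → Measurable φ₂ → Measurable φ₃ →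
      (∀ θ, φ₁ θ ∈ Icc (γm θ) (γp θ)) →
      (∀ θ, φ₂ θ ∈ Icc (γm θ) (γp θ)) →
      (∀ θ, φ₃ θ ∈ Icc (γm θ) (γp θ)) →
      (∀ θ, T θ (φ₁ θ) = φ₁ (θ + (ω : Torus))) →
      (∀ θ, T θ (φ₂ θ) = φ₂ (θ + (ω : Torus))) →
      (∀ θ, T θ (φ₃ θ) = φ₃ (θ + (ω : Torus))) →
      (φ₁ =ᵐ[volume] φ₂ ∨ φ₁ =ᵐ[volume] φ₃ ∨ φ₂ =ᵐ[volume] φ₃)) ∧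
    (∀ φ₁ φ₂ : Torus → ℝ,
      Measurable φ₁ → Measurable φ₂ →
      (∀ θ, φ₁ θ ∈ Icc (γm θ) (γp θ)) →
      (∀ θ, φ₂ θ ∈ Icc (γm θ) (γp θ)) →
      (∀ θ, T θ (φ₁ θ) = φ₁ (θ + (ω : Torus))) →
      (∀ θ, T θ (φ₂ θ) = φ₂ (θ + (ω : Torus))) →
      (∀ θ, φ₁ θ ≤ φ₂ θ) → ¬ (φ₁ =ᵐ[volume] φ₂) →
      (0 < ∫ θ : Torus, Real.log (DT θ (φ₁ θ))) ∧
        (∫ θ : Torus, Real.log (DT θ (φ₂ θ))) < 0) :=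
  concave_fibres_at_most_two_graphs_general ω hω a b T DT γm γp hDTcont hDTpos hderiv hγmem hconc
end

section
/- Let I be a compact metric space and (T_β)_{β ∈ I} a family of quasiperiodically forced monotone interval maps on 𝕋¹ × X, each with C¹ fibre maps and continuous strictly positive derivative, with (β,θ,x) ↦ T_{β,θ}(x) and (β,θ,x) ↦ DT_{β,θ}(x) continuous. Suppose there are sequences l⁺_p, l⁻_p ↗ ∞, points (θ_p, x_p) ∈ 𝕋¹ × X, parameters β_p ∈ I, and a constant c > 0 such that for all p, the finite-time forward Lyapunov exponents satisfy λ⁺(β_p, θ_p, x_p, j) > c for all j = 1,…,l⁺_p and the finite-time backward exponents satisfy λ⁻(β_p, θ_p, x_p, j) > c for all j = 1,…,l⁻_p. Then there exist β₀ ∈ I and a point (θ₀,x₀) with lim inf_{n→∞} λ⁺(β₀,θ₀,x₀,n) ≥ c > 0 and lim inf_{n→∞} λ⁻(β₀,θ₀,x₀,n) ≥ c > 0 (a sink-source orbit for T_{β₀}). -/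
open Set Filter

/-- Forward orbit of `x` on the fibre over `θ` for the parameter `β`:
`fwd ω T β θ x n = T_{β,θ}ⁿ(x)`, living on the fibre over `θ + nω`. -/
noncomputable def fwd {I : Type*} (ω : ℝ) (T : I → Torus → ℝ → ℝ)
    (β : I) (θ : Torus) (x : ℝ) : ℕ → ℝ
  | 0 => x
  | n + 1 => T β (θ + (((n : ℝ) * ω : ℝ) : Torus)) (fwd ω T β θ x n)

/-- Backward orbit of `x` built from the inverse fibre maps:
`bwd ω Tinv β θ x n = T_{β,θ}^{-n}(x)`, living on the fibre over `θ - nω`. -/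
noncomputable def bwd {I : Type*} (ω : ℝ) (Tinv : I → Torus → ℝ → ℝ)
    (β : I) (θ : Torus) (x : ℝ) : ℕ → ℝ
  | 0 => x
  | n + 1 => Tinv β (θ + (((-(n : ℝ) - 1) * ω : ℝ) : Torus)) (bwd ω Tinv β θ x n)

/-- Finite-time forward Lyapunov exponent
`λ⁺(β,θ,x,n) = (1/n) Σ_{i=0}^{n-1} log DT_{β,θ+iω}(T_{β,θ}^i x)`. -/
noncomputable def lamPlus {I : Type*} (ω : ℝ) (T DT : I → Torus → ℝ → ℝ)
    (β : I) (θ : Torus) (x : ℝ) (n : ℕ) : ℝ :=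
  (1 / (n : ℝ)) * ∑ i ∈ Finset.range n,
    Real.log (DT β (θ + (((i : ℝ) * ω : ℝ) : Torus)) (fwd ω T β θ x i))

/-- Finite-time backward Lyapunov exponent
`λ⁻(β,θ,x,n) = -(1/n) Σ_{i=1}^{n} log DT_{β,θ-iω}(T_{β,θ}^{-i} x)`. -/
noncomputable def lamMinus {I : Type*} (ω : ℝ) (Tinv DT : I → Torus → ℝ → ℝ)
    (β : I) (θ : Torus) (x : ℝ) (n : ℕ) : ℝ :=
  -(1 / (n : ℝ)) * ∑ i ∈ Finset.range n,
    Real.log (DT β (θ + (((-(i : ℝ) - 1) * ω : ℝ) : Torus)) (bwd ω Tinv β θ x (i + 1)))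


open Topology

lemma fwd_mem {I : Type*} (ω : ℝ) (T : I → Torus → ℝ → ℝ) {a b : ℝ}
    (hmaps : ∀ β θ, MapsTo (T β θ) (Icc a b) (Icc a b))
    (β : I) (θ : Torus) {x : ℝ} (hx : x ∈ Icc a b) :
    ∀ n, fwd ω T β θ x n ∈ Icc a b
  | 0 => hx
  | n + 1 => hmaps _ _ (fwd_mem ω T hmaps β θ hx n)

lemma bwd_mem {I : Type*} (ω : ℝ) (Tinv : I → Torus → ℝ → ℝ) {a b : ℝ}
    (hmaps : ∀ β θ, MapsTo (Tinv β θ) (Icc a b) (Icc a b))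
    (β : I) (θ : Torus) {x : ℝ} (hx : x ∈ Icc a b) :
    ∀ n, bwd ω Tinv β θ x n ∈ Icc a b
  | 0 => hx
  | n + 1 => hmaps _ _ (bwd_mem ω Tinv hmaps β θ hx n)

lemma fwd_continuous {I : Type*} [TopologicalSpace I] (ω : ℝ) (T : I → Torus → ℝ → ℝ)
    (hTcont : Continuous fun p : I × Torus × ℝ => T p.1 p.2.1 p.2.2) :
    ∀ n, Continuous fun p : I × Torus × ℝ => fwd ω T p.1 p.2.1 p.2.2 n := by
  intro n
  induction n with
  | zero => exact continuous_snd.comp continuous_snd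
  | succ n ih =>
    have h : (fun p : I × Torus × ℝ => fwd ω T p.1 p.2.1 p.2.2 (n + 1))
        = fun p : I × Torus × ℝ =>
          T p.1 (p.2.1 + (((n : ℝ) * ω : ℝ) : Torus)) (fwd ω T p.1 p.2.1 p.2.2 n) := rfl
    rw [h]
    exact hTcont.comp (continuous_fst.prodMk
      (((continuous_fst.comp continuous_snd).add continuous_const).prodMk ih))

lemma lamPlus_continuous {I : Type*} [TopologicalSpace I] (ω : ℝ)
    (T DT : I → Torus → ℝ → ℝ)
    (hTcont : Continuous fun p : I × Torus × ℝ => T p.1 p.2.1 p.2.2)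
    (hDTcont : Continuous fun p : I × Torus × ℝ => DT p.1 p.2.1 p.2.2)
    (hDTpos : ∀ β θ x, 0 < DT β θ x) (n : ℕ) :
    Continuous fun p : I × Torus × ℝ => lamPlus ω T DT p.1 p.2.1 p.2.2 n := by
  unfold lamPlus
  refine continuous_const.mul (continuous_finset_sum _ fun i _ => Continuous.log ?_
    fun p => (hDTpos _ _ _).ne')
  exact hDTcont.comp (continuous_fst.prodMk
    (((continuous_fst.comp continuous_snd).add continuous_const).prodMk
      (fwd_continuous ω T hTcont i)))

lemma tinv_tendsto {I : Type*} [TopologicalSpace I] {a b : ℝ}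
    (T Tinv DT : I → Torus → ℝ → ℝ)
    (hTinvmaps : ∀ β θ, MapsTo (Tinv β θ) (Icc a b) (Icc a b))
    (hinv₂ : ∀ β θ, ∀ x ∈ Icc a b, T β θ (Tinv β θ x) = x)
    (hderiv : ∀ β θ x, HasDerivAt (T β θ) (DT β θ x) x)
    (hDTpos : ∀ β θ x, 0 < DT β θ x)
    (hTcont : Continuous fun p : I × Torus × ℝ => T p.1 p.2.1 p.2.2)
    {βs : ℕ → I} {θs : ℕ → Torus} {ys : ℕ → ℝ} {β₀ : I} {θ₀ : Torus} {y₀ : ℝ}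
    (hβ : Tendsto βs atTop (𝓝 β₀)) (hθ : Tendsto θs atTop (𝓝 θ₀))
    (hy : Tendsto ys atTop (𝓝 y₀)) (hym : ∀ p, ys p ∈ Icc a b) (hy₀ : y₀ ∈ Icc a b) :
    Tendsto (fun p => Tinv (βs p) (θs p) (ys p)) atTop (𝓝 (Tinv β₀ θ₀ y₀)) := by
  have hinj : Function.Injective (T β₀ θ₀) :=
    (strictMono_of_deriv_pos fun x => by
      rw [(hderiv β₀ θ₀ x).deriv]; exact hDTpos _ _ _).injective
  apply tendsto_of_subseq_tendsto
  intro ns hns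
  obtain ⟨z, hzI, ms, hms, hz⟩ := (isCompact_Icc (a := a) (b := b)).tendsto_subseq
    (x := fun k => Tinv (βs (ns k)) (θs (ns k)) (ys (ns k)))
    (fun k => hTinvmaps _ _ (hym _))
  refine ⟨ms, ?_⟩
  have hnm : Tendsto (fun k => ns (ms k)) atTop atTop := hns.comp hms.tendsto_atTop
  have htuple : Tendsto
      (fun k => ((βs (ns (ms k)), (θs (ns (ms k)),
        Tinv (βs (ns (ms k))) (θs (ns (ms k))) (ys (ns (ms k)))))))
      atTop (𝓝 (β₀, (θ₀, z))) :=
    (hβ.comp hnm).prodMk_nhds ((hθ.comp hnm).prodMk_nhds hz)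
  have hTz : Tendsto
      (fun k => T (βs (ns (ms k))) (θs (ns (ms k)))
        (Tinv (βs (ns (ms k))) (θs (ns (ms k))) (ys (ns (ms k)))))
      atTop (𝓝 (T β₀ θ₀ z)) := (hTcont.tendsto _).comp htuple
  have hTz' : Tendsto (fun k => ys (ns (ms k))) atTop (𝓝 (T β₀ θ₀ z)) :=
    hTz.congr fun k => hinv₂ _ _ _ (hym _)
  have hTzy : T β₀ θ₀ z = y₀ := tendsto_nhds_unique hTz' (hy.comp hnm)
  have hz0 : z = Tinv β₀ θ₀ y₀ := hinj (by rw [hTzy, hinv₂ β₀ θ₀ y₀ hy₀])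
  rwa [hz0] at hz

lemma bwd_tendsto {I : Type*} [TopologicalSpace I] (ω : ℝ) {a b : ℝ}
    (T Tinv DT : I → Torus → ℝ → ℝ)
    (hTinvmaps : ∀ β θ, MapsTo (Tinv β θ) (Icc a b) (Icc a b))
    (hinv₂ : ∀ β θ, ∀ x ∈ Icc a b, T β θ (Tinv β θ x) = x)
    (hderiv : ∀ β θ x, HasDerivAt (T β θ) (DT β θ x) x)
    (hDTpos : ∀ β θ x, 0 < DT β θ x)
    (hTcont : Continuous fun p : I × Torus × ℝ => T p.1 p.2.1 p.2.2)
    {βs : ℕ → I} {θs : ℕ → Torus} {xs : ℕ → ℝ} {β₀ : I} {θ₀ : Torus} {x₀ : ℝ}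
    (hβ : Tendsto βs atTop (𝓝 β₀)) (hθ : Tendsto θs atTop (𝓝 θ₀))
    (hx : Tendsto xs atTop (𝓝 x₀)) (hxm : ∀ p, xs p ∈ Icc a b) (hx₀ : x₀ ∈ Icc a b) :
    ∀ n, Tendsto (fun p => bwd ω Tinv (βs p) (θs p) (xs p) n) atTop
      (𝓝 (bwd ω Tinv β₀ θ₀ x₀ n)) := by
  intro n
  induction n with
  | zero => exact hx
  | succ n ih =>
    have h1 : Tendsto (fun p => θs p + (((-(n : ℝ) - 1) * ω : ℝ) : Torus)) atTop
        (𝓝 (θ₀ + (((-(n : ℝ) - 1) * ω : ℝ) : Torus))) := hθ.add tendsto_const_nhds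
    exact tinv_tendsto T Tinv DT hTinvmaps hinv₂ hderiv hDTpos hTcont hβ h1 ih
      (fun p => bwd_mem ω Tinv hTinvmaps _ _ (hxm p) n)
      (bwd_mem ω Tinv hTinvmaps _ _ hx₀ n)

lemma lamMinus_tendsto {I : Type*} [TopologicalSpace I] (ω : ℝ) {a b : ℝ}
    (T Tinv DT : I → Torus → ℝ → ℝ)
    (hTinvmaps : ∀ β θ, MapsTo (Tinv β θ) (Icc a b) (Icc a b))
    (hinv₂ : ∀ β θ, ∀ x ∈ Icc a b, T β θ (Tinv β θ x) = x)
    (hderiv : ∀ β θ x, HasDerivAt (T β θ) (DT β θ x) x)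
    (hDTpos : ∀ β θ x, 0 < DT β θ x)
    (hTcont : Continuous fun p : I × Torus × ℝ => T p.1 p.2.1 p.2.2)
    (hDTcont : Continuous fun p : I × Torus × ℝ => DT p.1 p.2.1 p.2.2)
    {βs : ℕ → I} {θs : ℕ → Torus} {xs : ℕ → ℝ} {β₀ : I} {θ₀ : Torus} {x₀ : ℝ}
    (hβ : Tendsto βs atTop (𝓝 β₀)) (hθ : Tendsto θs atTop (𝓝 θ₀))
    (hx : Tendsto xs atTop (𝓝 x₀)) (hxm : ∀ p, xs p ∈ Icc a b) (hx₀ : x₀ ∈ Icc a b)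
    (n : ℕ) :
    Tendsto (fun p => lamMinus ω Tinv DT (βs p) (θs p) (xs p) n) atTop
      (𝓝 (lamMinus ω Tinv DT β₀ θ₀ x₀ n)) := by
  unfold lamMinus
  refine Tendsto.const_mul _ (tendsto_finset_sum _ fun i _ => ?_)
  have hb := bwd_tendsto ω T Tinv DT hTinvmaps hinv₂ hderiv hDTpos hTcont
    hβ hθ hx hxm hx₀ (i + 1)
  have h1 : Tendsto (fun p => θs p + (((-(i : ℝ) - 1) * ω : ℝ) : Torus)) atTop
      (𝓝 (θ₀ + (((-(i : ℝ) - 1) * ω : ℝ) : Torus))) := hθ.add tendsto_const_nhds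
  have htuple : Tendsto
      (fun p => (βs p, (θs p + (((-(i : ℝ) - 1) * ω : ℝ) : Torus),
        bwd ω Tinv (βs p) (θs p) (xs p) (i + 1))))
      atTop (𝓝 (β₀, (θ₀ + (((-(i : ℝ) - 1) * ω : ℝ) : Torus),
        bwd ω Tinv β₀ θ₀ x₀ (i + 1)))) :=
    hβ.prodMk_nhds (h1.prodMk_nhds hb)
  have hDT := (hDTcont.tendsto _).comp htuple
  exact ((Real.continuousAt_log (hDTpos β₀ _ _).ne').tendsto).comp hDT

/-- **Compactness produces a sink-source orbit.** Given a continuous compact family of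
quasiperiodically forced C¹ monotone interval maps and longer and longer finite pieces of
orbit with all finite-time forward and backward Lyapunov exponents above `c > 0`, there is
a parameter `β₀` and a point `(θ₀,x₀)` whose lower forward and backward Lyapunov exponents
are `≥ c > 0`, i.e. a sink-source orbit for `T_{β₀}`. -/
theorem sink_source_orbit_from_finite_time_exponents
    {I : Type*} [MetricSpace I] [CompactSpace I]
    (ω : ℝ) (hω : Irrational ω) (a b : ℝ) (hab : a ≤ b)
    (T Tinv DT : I → Torus → ℝ → ℝ)
    (hmaps : ∀ β θ, MapsTo (T β θ) (Icc a b) (Icc a b))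
    (hmono : ∀ β θ, MonotoneOn (T β θ) (Icc a b))
    (hTinvmaps : ∀ β θ, MapsTo (Tinv β θ) (Icc a b) (Icc a b))
    (hinv₁ : ∀ β θ, ∀ x ∈ Icc a b, Tinv β θ (T β θ x) = x)
    (hinv₂ : ∀ β θ, ∀ x ∈ Icc a b, T β θ (Tinv β θ x) = x)
    (hderiv : ∀ β θ x, HasDerivAt (T β θ) (DT β θ x) x)
    (hDTpos : ∀ β θ x, 0 < DT β θ x)
    (hTcont : Continuous fun p : I × Torus × ℝ => T p.1 p.2.1 p.2.2)
    (hDTcont : Continuous fun p : I × Torus × ℝ => DT p.1 p.2.1 p.2.2)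
    (c : ℝ) (hc : 0 < c)
    (lp lm : ℕ → ℕ)
    (hlp : Tendsto lp atTop atTop) (hlm : Tendsto lm atTop atTop)
    (θseq : ℕ → Torus) (xseq : ℕ → ℝ) (βseq : ℕ → I)
    (hxmem : ∀ p, xseq p ∈ Icc a b)
    (hfwd : ∀ p : ℕ, ∀ j : ℕ, 1 ≤ j → j ≤ lp p →
      c < lamPlus ω T DT (βseq p) (θseq p) (xseq p) j)
    (hbwd : ∀ p : ℕ, ∀ j : ℕ, 1 ≤ j → j ≤ lm p →
      c < lamMinus ω Tinv DT (βseq p) (θseq p) (xseq p) j) :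
    ∃ (β₀ : I) (θ₀ : Torus) (x₀ : ℝ), x₀ ∈ Icc a b ∧
      c ≤ liminf (fun n : ℕ => lamPlus ω T DT β₀ θ₀ x₀ n) atTop ∧
      c ≤ liminf (fun n : ℕ => lamMinus ω Tinv DT β₀ θ₀ x₀ n) atTop := by
  haveI : Fact ((0 : ℝ) < 1) := ⟨one_pos⟩
  have hK : IsCompact ((univ : Set I) ×ˢ (univ : Set Torus) ×ˢ Icc a b) :=
    isCompact_univ.prod (isCompact_univ.prod isCompact_Icc)
  obtain ⟨⟨β₀, θ₀, x₀⟩, hmemK, φ, hφ, hq⟩ := hK.tendsto_subseq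
    (x := fun p => (βseq p, θseq p, xseq p))
    (fun p => mem_prod.2 ⟨trivial, mem_prod.2 ⟨trivial, hxmem p⟩⟩)
  have hx₀ : x₀ ∈ Icc a b := hmemK.2.2
  have hβ : Tendsto (fun k => βseq (φ k)) atTop (nhds β₀) := (continuous_fst.tendsto _).comp hq
  have hθ : Tendsto (fun k => θseq (φ k)) atTop (nhds θ₀) :=
    ((continuous_fst.comp continuous_snd).tendsto _).comp hq
  have hx : Tendsto (fun k => xseq (φ k)) atTop (nhds x₀) :=
    ((continuous_snd.comp continuous_snd).tendsto _).comp hq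
  -- bound on |log DT| over the compact set
  obtain ⟨C, hC⟩ := hK.exists_bound_of_continuousOn
    ((hDTcont.log fun p => (hDTpos _ _ _).ne').continuousOn)
  have hC0 : 0 ≤ C := le_trans (norm_nonneg _) (hC (β₀, θ₀, x₀)
    (mem_prod.2 ⟨trivial, mem_prod.2 ⟨trivial, hx₀⟩⟩))
  have habs : ∀ (θ : Torus) (y : ℝ), y ∈ Icc a b → |Real.log (DT β₀ θ y)| ≤ C := by
    intro θ y hy
    exact hC (β₀, θ, y) (mem_prod.2 ⟨trivial, mem_prod.2 ⟨trivial, hy⟩⟩)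
  -- pointwise lower bounds at the limit
  have hplus : ∀ n, 1 ≤ n → c ≤ lamPlus ω T DT β₀ θ₀ x₀ n := by
    intro n hn
    have htend : Tendsto (fun k => lamPlus ω T DT (βseq (φ k)) (θseq (φ k)) (xseq (φ k)) n)
        atTop (nhds (lamPlus ω T DT β₀ θ₀ x₀ n)) :=
      ((lamPlus_continuous ω T DT hTcont hDTcont hDTpos n).tendsto _).comp hq
    refine ge_of_tendsto htend ?_
    filter_upwards [(hlp.comp hφ.tendsto_atTop).eventually_ge_atTop n] with k hk
    exact (hfwd (φ k) n hn hk).le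
  have hminus : ∀ n, 1 ≤ n → c ≤ lamMinus ω Tinv DT β₀ θ₀ x₀ n := by
    intro n hn
    have htend := lamMinus_tendsto ω T Tinv DT hTinvmaps hinv₂ hderiv hDTpos hTcont hDTcont
      hβ hθ hx (fun k => hxmem (φ k)) hx₀ n
    refine ge_of_tendsto htend ?_
    filter_upwards [(hlm.comp hφ.tendsto_atTop).eventually_ge_atTop n] with k hk
    exact (hbwd (φ k) n hn hk).le
  -- upper bounds (to make the liminf well-behaved)
  have hboundP : ∀ n, lamPlus ω T DT β₀ θ₀ x₀ n ≤ C := by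
    intro n
    rcases Nat.eq_zero_or_pos n with h0 | hpos
    · subst h0; simp [lamPlus, hC0]
    · have hterm : ∀ i ∈ Finset.range n,
          Real.log (DT β₀ (θ₀ + (((i : ℝ) * ω : ℝ) : Torus)) (fwd ω T β₀ θ₀ x₀ i)) ≤ C :=
        fun i _ => (le_abs_self _).trans (habs _ _ (fwd_mem ω T hmaps β₀ θ₀ hx₀ i))
      have hsum := Finset.sum_le_sum hterm
      rw [Finset.sum_const, Finset.card_range, nsmul_eq_mul] at hsum
      have hn : (0 : ℝ) < n := by exact_mod_cast hpos
      calc lamPlus ω T DT β₀ θ₀ x₀ n ≤ (1 / (n : ℝ)) * ((n : ℝ) * C) := by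
            exact mul_le_mul_of_nonneg_left hsum (by positivity)
        _ = C := by field_simp
  have hboundM : ∀ n, lamMinus ω Tinv DT β₀ θ₀ x₀ n ≤ C := by
    intro n
    rcases Nat.eq_zero_or_pos n with h0 | hpos
    · subst h0; simp [lamMinus, hC0]
    · have hterm : ∀ i ∈ Finset.range n,
          -Real.log (DT β₀ (θ₀ + (((-(i : ℝ) - 1) * ω : ℝ) : Torus))
            (bwd ω Tinv β₀ θ₀ x₀ (i + 1))) ≤ C :=
        fun i _ => (neg_le_abs _).trans
          (habs _ _ (bwd_mem ω Tinv hTinvmaps β₀ θ₀ hx₀ (i + 1)))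
      have hsum := Finset.sum_le_sum hterm
      rw [Finset.sum_const, Finset.card_range, nsmul_eq_mul] at hsum
      have hn : (0 : ℝ) < n := by exact_mod_cast hpos
      have heq : lamMinus ω Tinv DT β₀ θ₀ x₀ n
          = (1 / (n : ℝ)) * ∑ i ∈ Finset.range n,
            -Real.log (DT β₀ (θ₀ + (((-(i : ℝ) - 1) * ω : ℝ) : Torus))
              (bwd ω Tinv β₀ θ₀ x₀ (i + 1))) := by
        rw [lamMinus, Finset.sum_neg_distrib]; ring
      calc lamMinus ω Tinv DT β₀ θ₀ x₀ n
          ≤ (1 / (n : ℝ)) * ((n : ℝ) * C) := by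
            rw [heq]; exact mul_le_mul_of_nonneg_left hsum (by positivity)
        _ = C := by field_simp
  refine ⟨β₀, θ₀, x₀, hx₀, ?_, ?_⟩
  · refine le_liminf_of_le ?_ (eventually_atTop.2 ⟨1, fun n hn => hplus n hn⟩)
    exact (isBoundedUnder_of ⟨C, fun n => hboundP n⟩).isCoboundedUnder_ge
  · refine le_liminf_of_le ?_ (eventually_atTop.2 ⟨1, fun n hn => hminus n hn⟩)
    exact (isBoundedUnder_of ⟨C, fun n => hboundM n⟩).isCoboundedUnder_ge
end

section
/- Fix constants γ ≤ 1/16 and α with √α > 4/γ (hence √α ≥ 64). Let F : [−3,3] → [−3/2,3/2] be C¹ with F' > 0, satisfying F(1/α) ≥ 1 − γ and F(−1/α) ≤ −(1−γ), and let g : 𝕋¹ → [0,1] be continuous with g(θ) ≤ max{1 − 3γ, 1 − L₂·d(θ,0)}. For β ∈ [0,3/2] define the fibre maps T_{β,θ}(x) = F(x) − β·g(θ) and the orbit ξ_{j+1}(β,l) := T_{β, jω}(ξ_j(β,l)) with ξ_{−l}(β,l) = 3. Then, assuming β ≤ 1 + 4/√α, j ≥ −l and d(jω mod 1, 0) ≥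 3γ/L₂: (i) ξ_j(β,l) ≥ 1/α implies ξ_{j+1}(β,l) ≥ γ, and (ii) ξ_j(β,l) ≤ −1/α implies ξ_{j+1}(β,l) ≤ −γ. Consequently ξ_{j+1}(β,l) ∈ [−1/α, 1/α] implies ξ_j(β,l) ∈ [−1/α, 1/α]. -/
open Set

/-- **Basic estimate.** In the setting of the non-smooth saddle-node theorem
(`γ ≤ 1/16`, `√α > 4/γ`, `F : [-3,3] → [-3/2,3/2]` C¹ increasing with
`F(1/α) ≥ 1-γ`, `F(-1/α) ≤ -(1-γ)`, forcing `g : 𝕋¹ → [0,1]` with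
`g(θ) ≤ max {1-3γ, 1-L₂ d(θ,0)}`, fibre maps `T_{β,θ}(x) = F(x) - β g(θ)` and orbit
`ξ_{j+1} = F(ξ_j) - β g(jω)`, `ξ_{-l} = 3`): if `β ≤ 1 + 4/√α`, `j ≥ -l` and
`d(jω,0) ≥ 3γ/L₂`, then `ξ_j ≥ 1/α` implies `ξ_{j+1} ≥ γ`, `ξ_j ≤ -1/α` implies
`ξ_{j+1} ≤ -γ`, and consequently `ξ_{j+1} ∈ [-1/α,1/α]` implies `ξ_j ∈ [-1/α,1/α]`. -/
theorem basic_estimate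
    (α γ L₂ ω β : ℝ)
    (hγpos : 0 < γ) (hγ : γ ≤ 1 / 16)
    (hα : 4 / γ < Real.sqrt α)
    (hL₂ : 0 < L₂)
    (F F' : ℝ → ℝ)
    (hmaps : MapsTo F (Icc (-3 : ℝ) 3) (Icc (-(3 / 2) : ℝ) (3 / 2)))
    (hderiv : ∀ x ∈ Icc (-3 : ℝ) 3, HasDerivAt F (F' x) x)
    (hF'pos : ∀ x ∈ Icc (-3 : ℝ) 3, 0 < F' x)
    (hFup : 1 - γ ≤ F (1 / α)) (hFdown : F (-(1 / α)) ≤ -(1 - γ))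
    (g : Torus → ℝ) (hgcont : Continuous g) (hg01 : ∀ θ, g θ ∈ Icc (0 : ℝ) 1)
    (hgpeak : ∀ θ : Torus, g θ ≤ max (1 - 3 * γ) (1 - L₂ * ‖θ‖))
    (hβ0 : 0 ≤ β) (hβ : β ≤ 1 + 4 / Real.sqrt α)
    (l : ℤ) (ξ : ℤ → ℝ)
    (hstart : ξ (-l) = 3)
    (hrec : ∀ i : ℤ, -l ≤ i → ξ (i + 1) = F (ξ i) - β * g ((((i : ℝ) * ω : ℝ) : Torus)))
    (j : ℤ) (hj : -l ≤ j)
    (hfar : 3 * γ / L₂ ≤ ‖(((j : ℝ) * ω : ℝ) : Torus)‖) :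
    (1 / α ≤ ξ j → γ ≤ ξ (j + 1)) ∧
    (ξ j ≤ -(1 / α) → ξ (j + 1) ≤ -γ) ∧
    (ξ (j + 1) ∈ Icc (-(1 / α)) (1 / α) → ξ j ∈ Icc (-(1 / α)) (1 / α)) := by
  have hsq : 0 < Real.sqrt α := lt_trans (by positivity) hα
  have hαpos : 0 < α := by
    by_contra h
    push_neg at h
    rw [Real.sqrt_eq_zero_of_nonpos h] at hsq
    exact lt_irrefl 0 hsq
  have hαα : Real.sqrt α * Real.sqrt α = α := Real.mul_self_sqrt hαpos.le
  -- 4/√α < γ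
  have h4γ : 4 / Real.sqrt α < γ := by
    rw [div_lt_iff₀ hsq]
    rw [div_lt_iff₀ hγpos] at hα
    nlinarith
  have hβγ : β ≤ 1 + γ := by linarith
  -- 1/α < γ
  have h1αγ : 1 / α < γ := by
    rw [div_lt_iff₀ hαpos]
    rw [div_lt_iff₀ hγpos] at hα
    nlinarith [hαpos, hγpos]
  have h1αpos : 0 < 1 / α := by positivity
  -- endpoints in domain
  have h1αmem : (1 / α : ℝ) ∈ Icc (-3 : ℝ) 3 := ⟨by linarith, by linarith⟩
  have h1αmem' : (-(1 / α) : ℝ) ∈ Icc (-3 : ℝ) 3 := ⟨by linarith, by linarith⟩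
  -- monotonicity of F on [-3,3]
  have hcont : ContinuousOn F (Icc (-3 : ℝ) 3) :=
    fun x hx => (hderiv x hx).continuousAt.continuousWithinAt
  have hmono : MonotoneOn F (Icc (-3 : ℝ) 3) := by
    refine (strictMonoOn_of_deriv_pos (convex_Icc _ _) hcont ?_).monotoneOn
    intro x hx
    have hx' : x ∈ Icc (-3 : ℝ) 3 := interior_subset hx
    rw [(hderiv x hx').deriv]
    exact hF'pos x hx'
  -- the orbit stays in [-3,3]
  have hbound : ∀ i : ℤ, -l ≤ i → ξ i ∈ Icc (-3 : ℝ) 3 := by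
    refine Int.le_induction ?_ ?_
    · rw [hstart]; exact ⟨by norm_num, le_refl 3⟩
    · intro n hn ih
      have hξn := ih
      have hFn := hmaps hξn
      have hgn := hg01 ((((n : ℝ) * ω : ℝ) : Torus))
      have hβg0 : 0 ≤ β * g ((((n : ℝ) * ω : ℝ) : Torus)) :=
        mul_nonneg hβ0 hgn.1
      have hβg1 : β * g ((((n : ℝ) * ω : ℝ) : Torus)) ≤ 1 + γ := by
        calc β * g ((((n : ℝ) * ω : ℝ) : Torus)) ≤ β * 1 := by
              exact mul_le_mul_of_nonneg_left hgn.2 hβ0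
          _ ≤ 1 + γ := by linarith
      rw [hrec n hn]
      constructor
      · have := hFn.1; linarith
      · have := hFn.2; linarith
  -- g at the point jω is ≤ 1 - 3γ
  set θ : Torus := (((j : ℝ) * ω : ℝ) : Torus) with hθ
  have hgθ : g θ ≤ 1 - 3 * γ := by
    have h1 : 1 - L₂ * ‖θ‖ ≤ 1 - 3 * γ := by
      have : 3 * γ ≤ L₂ * ‖θ‖ := by
        rw [div_le_iff₀ hL₂] at hfar; linarith
      linarith
    have := hgpeak θ
    rw [max_eq_left h1] at this
    exact this
  have hgθ0 : 0 ≤ g θ := (hg01 θ).1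
  have hξj := hbound j hj
  have hrecj : ξ (j + 1) = F (ξ j) - β * g θ := hrec j hj
  -- β g(jω) ≤ 1 - 2γ
  have hβg : β * g θ ≤ 1 - 2 * γ := by
    have h3γ : (0 : ℝ) ≤ 1 - 3 * γ := by linarith
    calc β * g θ ≤ (1 + γ) * (1 - 3 * γ) := by
          apply mul_le_mul hβγ hgθ hgθ0 (by linarith)
      _ ≤ 1 - 2 * γ := by nlinarith
  have hpart1 : 1 / α ≤ ξ j → γ ≤ ξ (j + 1) := by
    intro hξ
    have hF : F (1 / α) ≤ F (ξ j) := hmono h1αmem hξj hξ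
    rw [hrecj]
    linarith
  have hpart2 : ξ j ≤ -(1 / α) → ξ (j + 1) ≤ -γ := by
    intro hξ
    have hF : F (ξ j) ≤ F (-(1 / α)) := hmono hξj h1αmem' hξ
    have hβg0 : 0 ≤ β * g θ := mul_nonneg hβ0 hgθ0
    rw [hrecj]
    linarith
  refine ⟨hpart1, hpart2, ?_⟩
  rintro ⟨h1, h2⟩
  constructor
  · by_contra h
    push_neg at h
    have := hpart2 h.le
    linarith
  · by_contra h
    push_neg at h
    have := hpart1 h.le
    linarith
end

section
/- Under the assumptions of the basic estimate (γ ≤ 1/16, √α > 4/γ, F and g as specified, fibre maps T_{β,θ}(x) = F(x) − βg(θ), orbit ξ_j(β,l) starting at ξ_{−l}(β,l) = 3; additionally F(x_α) = x_α for x_α = 1 + 2/√α, F' ≤ (1/2)α^{−1/2} on {|x| ≥ γ}, and g(0) = 1): let n ≥ 1, l ≥ 0, and suppose d(jω mod 1, 0) ≥ 3γ/L₂ for all j ∈ [−l,−1] ∪ [1,n−1]. Then ξ_n(β,l) ∈ [−1/α, 1/α] implies: (a) β ∈ [1 + 1/√α, 1 + 3/√α]; (b) ξ_j(β,l) ∈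 [−1/α,1/α] for all j ∈ [1,n]; (c) ξ_j(β,l) ≥ γ for all j ∈ [−l,0]. -/
/-!
Put `u = 1/√α`, so that `1/α = u²` and `x_α = 1 + 2u`. As `F` is increasing and
`(u/2)`-Lipschitz on `[γ, 3]` around its fixed point `x_α`, it is at most `1 + 3u - u²` on `[-3, 3]`
and at least `1 + 3u/2 - u²` on `[γ, 3]`. The half-line below `-u²` is forward invariant, so
`ξ₁ = F(ξ₀) - β ≥ -u²` forces `β ≤ 1 + 3u`. Away from the peak of `g` the kick `βg` is then at
most `1 - 2γ`, while `F ≥ 1 - γ` on `[u², 3]`, so each such step maps `[u², 3]` above `γ`. This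
gives `ξ_j ≥ γ` for `j ≤ 0`, and `ξ_j ≤ u²` for `1 ≤ j ≤ n` since otherwise `ξ_n > u²`.
Finally `ξ₁ ≤ u²` together with `ξ₀ ≥ γ` gives `β ≥ 1 + u`.
-/

open Set

section MeanValue

variable {F F' : ℝ → ℝ} {a b : ℝ}

theorem strictMonoOn_Icc_of_hasDerivAt_pos (hderiv : ∀ x ∈ Icc a b, HasDerivAt F (F' x) x)
    (hpos : ∀ x ∈ Icc a b, 0 < F' x) : StrictMonoOn F (Icc a b) :=
  strictMonoOn_of_hasDerivWithinAt_pos (convex_Icc a b)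
    (fun x hx => (hderiv x hx).continuousAt.continuousWithinAt)
    (fun x hx => (hderiv x (interior_subset hx)).hasDerivWithinAt)
    (fun x hx => hpos x (interior_subset hx))

theorem sub_le_mul_sub_of_hasDerivAt_le {C : ℝ} (hderiv : ∀ x ∈ Icc a b, HasDerivAt F (F' x) x)
    (hC : ∀ x ∈ Icc a b, F' x ≤ C) (hab : a ≤ b) : F b - F a ≤ C * (b - a) := by
  have hF : DifferentiableOn ℝ F (Icc a b) := fun x hx =>
    (hderiv x hx).differentiableAt.differentiableWithinAt
  refine (convex_Icc a b).image_sub_le_mul_sub_of_deriv_le hF.continuousOn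
    (hF.mono interior_subset) (fun x hx => ?_) a (left_mem_Icc.2 hab) b (right_mem_Icc.2 hab) hab
  rw [(hderiv x (interior_subset hx)).deriv]
  exact hC x (interior_subset hx)

end MeanValue

theorem four_mul_inv_lt {s γ : ℝ} (hγ : 0 < γ) (hs : 4 / γ < s) : 4 * s⁻¹ < γ := by
  have hs0 : 0 < s := (by positivity : (0 : ℝ) < 4 / γ).trans hs
  rw [div_lt_iff₀ hγ] at hs
  rw [mul_inv_lt_iff₀ hs0]
  linarith

section BasicEstimate

variable {F F' : ℝ → ℝ} {γ u : ℝ}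

theorem sub_le_half_mul_sub (hderiv : ∀ x ∈ Icc (-3 : ℝ) 3, HasDerivAt F (F' x) x)
    (hcontr : ∀ x ∈ Icc (-3 : ℝ) 3, γ ≤ |x| → F' x ≤ 1 / 2 * u) (hγ : 0 ≤ γ)
    {x y : ℝ} (hγx : γ ≤ x) (hxy : x ≤ y) (hy : y ≤ 3) : F y - F x ≤ 1 / 2 * u * (y - x) := by
  have hsub : Icc x y ⊆ Icc (-3) 3 := Icc_subset_Icc (by linarith) hy
  exact sub_le_mul_sub_of_hasDerivAt_le (fun z hz => hderiv z (hsub hz))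
    (fun z hz => hcontr z (hsub hz) (hγx.trans (hz.1.trans (le_abs_self z)))) hxy

theorem fibreMap_le (hmono : MonotoneOn F (Icc (-3) 3))
    (hderiv : ∀ x ∈ Icc (-3 : ℝ) 3, HasDerivAt F (F' x) x)
    (hcontr : ∀ x ∈ Icc (-3 : ℝ) 3, γ ≤ |x| → F' x ≤ 1 / 2 * u) (hγ : 0 ≤ γ)
    (hfix : F (1 + 2 * u) = 1 + 2 * u) (hγu : γ ≤ 1 + 2 * u) (hu : u ≤ 1)
    {x : ℝ} (hx : x ∈ Icc (-3 : ℝ) 3) : F x ≤ 1 + 3 * u - u ^ 2 := by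
  have h3 : F 3 - F (1 + 2 * u) ≤ 1 / 2 * u * (3 - (1 + 2 * u)) :=
    sub_le_half_mul_sub hderiv hcontr hγ hγu (by linarith) le_rfl
  have hx3 : F x ≤ F 3 := hmono hx ⟨by norm_num, le_rfl⟩ hx.2
  linarith

theorem le_fibreMap (hmono : MonotoneOn F (Icc (-3) 3))
    (hderiv : ∀ x ∈ Icc (-3 : ℝ) 3, HasDerivAt F (F' x) x)
    (hcontr : ∀ x ∈ Icc (-3 : ℝ) 3, γ ≤ |x| → F' x ≤ 1 / 2 * u) (hγ : 0 ≤ γ)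
    (hfix : F (1 + 2 * u) = 1 + 2 * u) (hγu : γ ≤ 1 + 2 * u) (hu0 : 0 ≤ u) (hu : u ≤ 1)
    {x : ℝ} (hx : x ∈ Icc γ 3) : 1 + 3 / 2 * u - u ^ 2 ≤ F x := by
  have hγ' : F (1 + 2 * u) - F γ ≤ 1 / 2 * u * (1 + 2 * u - γ) :=
    sub_le_half_mul_sub hderiv hcontr hγ le_rfl hγu (by linarith)
  have hγx : F γ ≤ F x := hmono ⟨by linarith, by linarith [hx.2]⟩ ⟨by linarith [hx.1], hx.2⟩ hx.1
  nlinarith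

end BasicEstimate

theorem le_one_sub_of_le_norm {g : Torus → ℝ} {γ L₂ : ℝ} (hL₂ : 0 < L₂)
    (hpeak : ∀ θ : Torus, g θ ≤ max (1 - 3 * γ) (1 - L₂ * ‖θ‖))
    {θ : Torus} (hθ : 3 * γ / L₂ ≤ ‖θ‖) : g θ ≤ 1 - 3 * γ := by
  rw [div_le_iff₀ hL₂] at hθ
  exact (hpeak θ).trans (max_le le_rfl (by nlinarith))

theorem mul_le_one_sub_two_mul {β c γ u : ℝ} (hu : 0 ≤ u) (hγu : 4 * u < γ)
    (hβ : β ≤ 1 + 3 * u) (hc0 : 0 ≤ c) (hc : c ≤ 1 - 3 * γ) : β * c ≤ 1 - 2 * γ := by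
  nlinarith [mul_nonneg hu (by linarith : 0 ≤ 1 - 3 * γ)]

section Orbit

variable {F : ℝ → ℝ} {c ξ : ℤ → ℝ} {l : ℤ}

theorem orbit_mem_Icc (hmaps : MapsTo F (Icc (-3) 3) (Icc (-(3 / 2)) (3 / 2)))
    (hc : ∀ i, c i ∈ Icc (0 : ℝ) (3 / 2)) (hstart : ξ (-l) = 3)
    (hrec : ∀ i, -l ≤ i → ξ (i + 1) = F (ξ i) - c i) :
    ∀ j, -l ≤ j → ξ j ∈ Icc (-3 : ℝ) 3 := by
  intro j hj
  induction j, hj using Int.leInduction with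
  | base => simp [hstart]
  | succ i hi ih =>
    obtain ⟨h1, h2⟩ := hmaps ih
    obtain ⟨h3, h4⟩ := hc i
    rw [hrec i hi]
    constructor <;> linarith

theorem neg_le_orbit (hF : StrictMonoOn F (Icc (-3) 3)) {δ : ℝ} (hδ : -δ ∈ Icc (-3 : ℝ) 3)
    (hFδ : F (-δ) ≤ -δ) (hc : ∀ i, 0 ≤ c i) (hmem : ∀ j, -l ≤ j → ξ j ∈ Icc (-3 : ℝ) 3)
    (hrec : ∀ i, -l ≤ i → ξ (i + 1) = F (ξ i) - c i) {n : ℤ} (hn : -δ ≤ ξ n) :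
    ∀ j, -l ≤ j → j ≤ n → -δ ≤ ξ j := by
  intro j hlj hjn
  by_contra! hj
  suffices ∀ k, j ≤ k → ξ k < -δ from (this n hjn).not_ge hn
  intro k hjk
  induction k, hjk using Int.leInduction with
  | base => exact hj
  | succ i hji ih =>
    have := hF (hmem i (hlj.trans hji)) hδ ih
    rw [hrec i (hlj.trans hji)]
    linarith [hc i]

theorem min_le_orbit (hF : MonotoneOn F (Icc (-3) 3)) {γ δ : ℝ} (hδ : δ ∈ Icc (-3 : ℝ) 3)
    (hδγ : δ ≤ γ) (hFδ : 1 - γ ≤ F δ) (hmem : ∀ j, -l ≤ j → ξ j ∈ Icc (-3 : ℝ) 3)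
    (hrec : ∀ i, -l ≤ i → ξ (i + 1) = F (ξ i) - c i) {a b : ℤ} (hla : -l ≤ a) (ha : δ ≤ ξ a)
    (hfar : ∀ i, a ≤ i → i < b → c i ≤ 1 - 2 * γ) :
    ∀ k, a ≤ k → k ≤ b → min (ξ a) γ ≤ ξ k := by
  intro k hak
  induction k, hak using Int.leInduction with
  | base => exact fun _ => min_le_left _ _
  | succ i hai ih =>
    intro hib
    have hδi : δ ≤ ξ i := (le_min ha hδγ).trans (ih (by omega))
    have := hF hδ (hmem i (hla.trans hai)) hδi
    rw [hrec i (hla.trans hai)]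
    linarith [min_le_right (ξ a) γ, hfar i hai (by omega)]

theorem orbit_le_of_far (hF : MonotoneOn F (Icc (-3) 3)) {γ δ : ℝ} (hδ : δ ∈ Icc (-3 : ℝ) 3)
    (hδγ : δ < γ) (hFδ : 1 - γ ≤ F δ) (hmem : ∀ j, -l ≤ j → ξ j ∈ Icc (-3 : ℝ) 3)
    (hrec : ∀ i, -l ≤ i → ξ (i + 1) = F (ξ i) - c i) {a n : ℤ} (hla : -l ≤ a)
    (hfar : ∀ i, a ≤ i → i < n → c i ≤ 1 - 2 * γ) (hn : ξ n ≤ δ) :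
    ∀ j, a ≤ j → j ≤ n → ξ j ≤ δ := by
  intro j haj hjn
  by_contra! hj
  have := min_le_orbit hF hδ hδγ.le hFδ hmem hrec (hla.trans haj) hj.le
    (fun i hji hin => hfar i (haj.trans hji) hin) n hjn le_rfl
  exact (lt_min hj hδγ).not_ge (this.trans hn)

end Orbit

theorem induction_start_general
    (α γ L₂ ω β : ℝ)
    (hγpos : 0 < γ) (hγ : γ ≤ 1 / 16)
    (hα : 4 / γ < Real.sqrt α)
    (hL₂ : 0 < L₂)
    (F F' : ℝ → ℝ)
    (hmaps : MapsTo F (Icc (-3 : ℝ) 3) (Icc (-(3 / 2) : ℝ) (3 / 2)))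
    (hderiv : ∀ x ∈ Icc (-3 : ℝ) 3, HasDerivAt F (F' x) x)
    (hF'pos : ∀ x ∈ Icc (-3 : ℝ) 3, 0 < F' x)
    (hFfixp : F (1 + 2 / Real.sqrt α) = 1 + 2 / Real.sqrt α)
    (hFup : 1 - γ ≤ F (1 / α)) (hFdown : F (-(1 / α)) ≤ -(1 - γ))
    (hFcontr : ∀ x ∈ Icc (-3 : ℝ) 3, γ ≤ |x| → F' x ≤ (1 / 2) * (Real.sqrt α)⁻¹)
    (g : Torus → ℝ) (hg01 : ∀ θ, g θ ∈ Icc (0 : ℝ) 1)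
    (hg0 : g 0 = 1)
    (hgpeak : ∀ θ : Torus, g θ ≤ max (1 - 3 * γ) (1 - L₂ * ‖θ‖))
    (hβmem : β ∈ Icc (0 : ℝ) (3 / 2))
    (n l : ℤ) (hn : 1 ≤ n) (hl : 0 ≤ l)
    (ξ : ℤ → ℝ)
    (hstart : ξ (-l) = 3)
    (hrec : ∀ i : ℤ, -l ≤ i → ξ (i + 1) = F (ξ i) - β * g ((((i : ℝ) * ω : ℝ) : Torus)))
    (hfar : ∀ j : ℤ, ((-l ≤ j ∧ j ≤ -1) ∨ (1 ≤ j ∧ j ≤ n - 1)) →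
      3 * γ / L₂ ≤ ‖(((j : ℝ) * ω : ℝ) : Torus)‖)
    (hend : ξ n ∈ Icc (-(1 / α)) (1 / α)) :
    β ∈ Icc (1 + 1 / Real.sqrt α) (1 + 3 / Real.sqrt α) ∧
    (∀ j : ℤ, 1 ≤ j → j ≤ n → ξ j ∈ Icc (-(1 / α)) (1 / α)) ∧
    (∀ j : ℤ, -l ≤ j → j ≤ 0 → γ ≤ ξ j) := by
  obtain ⟨hβ0, hβ32⟩ := hβmem
  have hs : 0 < Real.sqrt α := (by positivity : (0 : ℝ) < 4 / γ).trans hα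
  set u := (Real.sqrt α)⁻¹ with hu
  have hu0 : 0 < u := inv_pos.2 hs
  have hu4 : 4 * u < γ := four_mul_inv_lt hγpos hα
  have hα' : 1 / α = u ^ 2 := by rw [hu, inv_pow, Real.sq_sqrt (Real.sqrt_pos.1 hs).le, one_div]
  rw [div_eq_mul_inv 2, ← hu] at hFfixp
  rw [hα'] at hFup hFdown hend ⊢
  rw [one_div, div_eq_mul_inv 3, ← hu]
  have hmono := strictMonoOn_Icc_of_hasDerivAt_pos hderiv hF'pos
  have hu2 : u ^ 2 ∈ Icc (-3 : ℝ) 3 := ⟨by nlinarith, by nlinarith⟩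
  set c : ℤ → ℝ := fun i => β * g (((i : ℝ) * ω : ℝ) : Torus)
  have hc : ∀ i, c i ∈ Icc (0 : ℝ) (3 / 2) := fun i =>
    ⟨mul_nonneg hβ0 (hg01 _).1, (mul_le_of_le_one_right hβ0 (hg01 _).2).trans hβ32⟩
  have hmem := orbit_mem_Icc hmaps hc hstart hrec
  have hlow := neg_le_orbit hmono ⟨by nlinarith, by nlinarith⟩ (by nlinarith)
    (fun i => (hc i).1) hmem hrec hend.1
  have hξ1 : ξ 1 = F (ξ 0) - β := by simpa [hg0] using hrec 0 (by omega)
  have hβup : β ≤ 1 + 3 * u := by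
    linarith [hlow 1 (by omega) hn, fibreMap_le hmono.monotoneOn hderiv hFcontr hγpos.le hFfixp
      (by linarith) (by linarith) (hmem 0 (by omega))]
  have hkick : ∀ j, ((-l ≤ j ∧ j ≤ -1) ∨ (1 ≤ j ∧ j ≤ n - 1)) → c j ≤ 1 - 2 * γ := fun j hj =>
    mul_le_one_sub_two_mul hu0.le hu4 hβup (hg01 _).1 (le_one_sub_of_le_norm hL₂ hgpeak (hfar j hj))
  have hpast : ∀ j, -l ≤ j → j ≤ 0 → γ ≤ ξ j := fun j hj hj0 => by
    simpa [hstart, min_eq_right (by linarith : γ ≤ 3)] using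
      min_le_orbit hmono.monotoneOn hu2 (by nlinarith) hFup hmem hrec le_rfl
        (by rw [hstart]; nlinarith) (fun i hi hi0 => hkick i (Or.inl ⟨hi, by omega⟩)) j hj hj0
  have hfuture := orbit_le_of_far hmono.monotoneOn hu2 (by nlinarith) hFup hmem hrec (a := 1)
    (by omega) (fun i h1 hin => hkick i (Or.inr ⟨h1, by omega⟩)) hend.2
  have hβlo : 1 + u ≤ β := by
    nlinarith [hfuture 1 le_rfl hn, le_fibreMap hmono.monotoneOn hderiv hFcontr hγpos.le hFfixp
      (by linarith) hu0.le (by linarith) ⟨hpast 0 (by omega) le_rfl, (hmem 0 (by omega)).2⟩]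
  exact ⟨⟨hβlo, hβup⟩, fun j h1 hjn => ⟨hlow j (by omega) hjn, hfuture j h1 hjn⟩, hpast⟩

/-- **Induction start.** In the setting of the basic estimate, with additionally
`F(x_α) = x_α` for `x_α = 1 + 2/√α`, `F' ≤ (1/2)α^{-1/2}` on `{|x| ≥ γ}` and
`g(0) = 1`: if `n ≥ 1`, `l ≥ 0` and `d(jω,0) ≥ 3γ/L₂` for all
`j ∈ [-l,-1] ∪ [1,n-1]`, then `ξ_n(β,l) ∈ [-1/α,1/α]` implies
`β ∈ [1+1/√α, 1+3/√α]`, `ξ_j(β,l) ∈ [-1/α,1/α]` for all `j ∈ [1,n]`, and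
`ξ_j(β,l) ≥ γ` for all `j ∈ [-l,0]`. -/
theorem induction_start
    (α γ L₂ ω β : ℝ)
    (hγpos : 0 < γ) (hγ : γ ≤ 1 / 16)
    (hα : 4 / γ < Real.sqrt α)
    (hL₂ : 0 < L₂)
    (F F' : ℝ → ℝ)
    (hmaps : MapsTo F (Icc (-3 : ℝ) 3) (Icc (-(3 / 2) : ℝ) (3 / 2)))
    (hderiv : ∀ x ∈ Icc (-3 : ℝ) 3, HasDerivAt F (F' x) x)
    (hF'pos : ∀ x ∈ Icc (-3 : ℝ) 3, 0 < F' x)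
    (hFfix0 : F 0 = 0)
    (hFfixp : F (1 + 2 / Real.sqrt α) = 1 + 2 / Real.sqrt α)
    (hFfixm : F (-(1 + 2 / Real.sqrt α)) = -(1 + 2 / Real.sqrt α))
    (hFup : 1 - γ ≤ F (1 / α)) (hFdown : F (-(1 / α)) ≤ -(1 - γ))
    (hFcontr : ∀ x ∈ Icc (-3 : ℝ) 3, γ ≤ |x| → F' x ≤ (1 / 2) * (Real.sqrt α)⁻¹)
    (g : Torus → ℝ) (hgcont : Continuous g) (hg01 : ∀ θ, g θ ∈ Icc (0 : ℝ) 1)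
    (hg0 : g 0 = 1)
    (hgpeak : ∀ θ : Torus, g θ ≤ max (1 - 3 * γ) (1 - L₂ * ‖θ‖))
    (hβmem : β ∈ Icc (0 : ℝ) (3 / 2))
    (n l : ℤ) (hn : 1 ≤ n) (hl : 0 ≤ l)
    (ξ : ℤ → ℝ)
    (hstart : ξ (-l) = 3)
    (hrec : ∀ i : ℤ, -l ≤ i → ξ (i + 1) = F (ξ i) - β * g ((((i : ℝ) * ω : ℝ) : Torus)))
    (hfar : ∀ j : ℤ, ((-l ≤ j ∧ j ≤ -1) ∨ (1 ≤ j ∧ j ≤ n - 1)) →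
      3 * γ / L₂ ≤ ‖(((j : ℝ) * ω : ℝ) : Torus)‖)
    (hend : ξ n ∈ Icc (-(1 / α)) (1 / α)) :
    β ∈ Icc (1 + 1 / Real.sqrt α) (1 + 3 / Real.sqrt α) ∧
    (∀ j : ℤ, 1 ≤ j → j ≤ n → ξ j ∈ Icc (-(1 / α)) (1 / α)) ∧
    (∀ j : ℤ, -l ≤ j → j ≤ 0 → γ ≤ ξ j) :=
  induction_start_general α γ L₂ ω β hγpos hγ hα hL₂ F F' hmaps hderiv hF'pos hFfixp hFup hFdown
    hFcontr g hg01 hg0 hgpeak hβmem n l hn hl ξ hstart hrec hfar hend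
end

section
/- Let α > 1 and let F : [−3,3] → ℝ be differentiable. Suppose 2α^{−2} ≤ F'(x) ≤ α² for all x, F'(x) ≤ (1/2)α^{−1/2} whenever |x| ≥ γ, and fix constants K, ε > 0. Let (x¹_j) and (x²_j) be two orbits with x^i_{j+1} = F(x^i_j) − c^i_j where the driving terms satisfy |c¹_j − c²_j| ≤ K·ε for all j. Define η(k,n) := #{ j ∈ [k,n] : x¹_j < γ or x²_j < γ }. If η(j,n) ≤ (n+1−j)/10 for all j = 1,…,n and α^{−n/4} ≤ ε, and |x¹_1|, |x²_1| ≤ 3, then |x¹_{n+1} − x²_{n+1}| ≤ ε·(6 + K·Σ_{j=0}^∞ α^{−j/4}). -/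
open Set
open scoped Classical

/-- **Orbit contraction.** Two orbits `x¹, x²` of `x_{j+1} = F(x_j) - c_j` generated by
`Kε`-close driving terms, which spend at least `9/10` of every tail of the time interval
in the contracting region `{x ≥ γ}` (where `F' ≤ (1/2) α^{-1/2}`), satisfy
`|x¹_{n+1} - x²_{n+1}| ≤ ε (6 + K Σ_{j≥0} α^{-j/4})`, provided `α^{-n/4} ≤ ε` and
`|x¹_1|, |x²_1| ≤ 3`. -/
theorem orbit_contraction
    (α γ K ε : ℝ) (hα : 1 < α) (hγpos : 0 < γ) (hK : 0 ≤ K)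
    (F F' : ℝ → ℝ)
    (hderiv : ∀ x : ℝ, HasDerivAt F (F' x) x)
    (hlow : ∀ x : ℝ, 2 / α ^ 2 ≤ F' x)
    (hup : ∀ x : ℝ, F' x ≤ α ^ 2)
    (hcontr : ∀ x : ℝ, γ ≤ |x| → F' x ≤ (1 / 2) * (Real.sqrt α)⁻¹)
    (x1 x2 c1 c2 : ℕ → ℝ)
    (hrec1 : ∀ j : ℕ, 1 ≤ j → x1 (j + 1) = F (x1 j) - c1 j)
    (hrec2 : ∀ j : ℕ, 1 ≤ j → x2 (j + 1) = F (x2 j) - c2 j)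
    (hc : ∀ j : ℕ, |c1 j - c2 j| ≤ K * ε)
    (n : ℕ)
    (heta : ∀ j : ℕ, 1 ≤ j → j ≤ n →
      ((((Finset.Icc j n).filter (fun i => x1 i < γ ∨ x2 i < γ)).card : ℝ))
        ≤ ((n : ℝ) + 1 - (j : ℝ)) / 10)
    (hεn : α ^ (-(n : ℝ) / 4) ≤ ε)
    (hx1 : |x1 1| ≤ 3) (hx2 : |x2 1| ≤ 3) :
    |x1 (n + 1) - x2 (n + 1)| ≤ ε * (6 + K * ∑' j : ℕ, α ^ (-(j : ℝ) / 4)) := by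
  have hαpos : 0 < α := lt_trans one_pos hα
  have hε : 0 < ε := lt_of_lt_of_le (Real.rpow_pos_of_pos hαpos _) hεn
  set e : ℕ → ℝ := fun i => if x1 i < γ ∨ x2 i < γ then (2 : ℝ) else -(1/2) with he_def
  have hF'nonneg : ∀ x : ℝ, 0 ≤ F' x := fun x => le_trans (by positivity) (hlow x)
  -- step estimate
  have hstep : ∀ j : ℕ, 1 ≤ j →
      |x1 (j+1) - x2 (j+1)| ≤ α ^ (e j) * |x1 j - x2 j| + K * ε := by
    intro j hj
    have hC : ∀ x ∈ Set.uIcc (x2 j) (x1 j), ‖F' x‖ ≤ α ^ (e j) := by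
      intro x hx
      rw [Real.norm_eq_abs, abs_of_nonneg (hF'nonneg x)]
      by_cases hb : x1 j < γ ∨ x2 j < γ
      · have : e j = 2 := by rw [he_def]; simp only [if_pos hb]
        rw [this]
        calc F' x ≤ α ^ 2 := hup x
          _ = α ^ (2 : ℝ) := by rw [← Real.rpow_natCast α 2]; norm_num
      · have hej : e j = -(1/2) := by rw [he_def]; simp only [if_neg hb]
        push_neg at hb
        have hγx : γ ≤ x := by
          rcases Set.mem_uIcc.mp hx with ⟨h1, h2⟩ | ⟨h1, h2⟩
          · linarith [hb.2]
          · linarith [hb.1]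
        have h1 : F' x ≤ (1/2) * (Real.sqrt α)⁻¹ :=
          hcontr x (le_trans hγx (le_abs_self x))
        have h2 : (1/2) * (Real.sqrt α)⁻¹ ≤ α ^ (-(1/2) : ℝ) := by
          rw [Real.rpow_neg hαpos.le, show ((1:ℝ)/2) = (1/2 : ℝ) from rfl,
            ← Real.sqrt_eq_rpow]
          have : (0:ℝ) ≤ (Real.sqrt α)⁻¹ := by positivity
          linarith
        rw [hej]; linarith
    have hmvt : ‖F (x1 j) - F (x2 j)‖ ≤ α ^ (e j) * ‖x1 j - x2 j‖ :=
      Convex.norm_image_sub_le_of_norm_hasDerivWithin_le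
        (fun x _ => (hderiv x).hasDerivWithinAt) hC (convex_uIcc _ _)
        Set.left_mem_uIcc Set.right_mem_uIcc
    rw [hrec1 j hj, hrec2 j hj]
    have habs : |F (x1 j) - c1 j - (F (x2 j) - c2 j)|
        ≤ |F (x1 j) - F (x2 j)| + |c1 j - c2 j| := by
      have h : F (x1 j) - c1 j - (F (x2 j) - c2 j)
          = (F (x1 j) - F (x2 j)) - (c1 j - c2 j) := by ring
      rw [h]
      exact abs_sub _ _
    refine habs.trans (add_le_add ?_ (hc j))
    simpa [Real.norm_eq_abs] using hmvt
  -- main induction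
  have key : ∀ m : ℕ, 1 ≤ m → m ≤ n + 1 →
      |x1 m - x2 m| ≤ |x1 1 - x2 1| * α ^ (∑ i ∈ Finset.Ico 1 m, e i)
        + K * ε * ∑ i ∈ Finset.Ico 1 m, α ^ (∑ l ∈ Finset.Ico (i+1) m, e l) := by
    intro m hm
    induction m, hm using Nat.le_induction with
    | base =>
        intro _
        simp
    | succ m hm ih =>
        intro hm1
        have hmn : m ≤ n := by omega
        have ih' := ih (by omega)
        have hKε : (0:ℝ) ≤ K * ε := mul_nonneg hK hε.le
        have hpow : (0:ℝ) ≤ α ^ (e m) := (Real.rpow_pos_of_pos hαpos _).le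
        calc |x1 (m+1) - x2 (m+1)| ≤ α ^ (e m) * |x1 m - x2 m| + K * ε := hstep m hm
          _ ≤ α ^ (e m) * (|x1 1 - x2 1| * α ^ (∑ i ∈ Finset.Ico 1 m, e i)
              + K * ε * ∑ i ∈ Finset.Ico 1 m, α ^ (∑ l ∈ Finset.Ico (i+1) m, e l))
              + K * ε := by
            have := mul_le_mul_of_nonneg_left ih' hpow
            linarith
          _ = |x1 1 - x2 1| * α ^ (∑ i ∈ Finset.Ico 1 (m+1), e i)
              + K * ε * ∑ i ∈ Finset.Ico 1 (m+1), α ^ (∑ l ∈ Finset.Ico (i+1) (m+1), e l) := by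
            rw [Finset.sum_Ico_succ_top hm (fun i => α ^ (∑ l ∈ Finset.Ico (i+1) (m+1), e l)),
              Finset.sum_Ico_succ_top hm e, Real.rpow_add hαpos,
              show (∑ i ∈ Finset.Ico 1 m, α ^ (∑ l ∈ Finset.Ico (i+1) (m+1), e l))
                  = ∑ i ∈ Finset.Ico 1 m, α ^ (∑ l ∈ Finset.Ico (i+1) m, e l) * α ^ (e m) from
                Finset.sum_congr rfl (fun i hi => by
                  rw [Finset.sum_Ico_succ_top (Finset.mem_Ico.mp hi).2 e,
                    Real.rpow_add hαpos])]
            rw [Finset.Ico_self, Finset.sum_empty, Real.rpow_zero, ← Finset.sum_mul]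
            ring
  -- exponent bound
  have hE : ∀ j : ℕ, 1 ≤ j → j ≤ n + 1 →
      (∑ i ∈ Finset.Ico j (n+1), e i) ≤ -((n:ℝ) + 1 - j) / 4 := by
    intro j hj hjn1
    by_cases hjn : j ≤ n
    · rw [Finset.Ico_add_one_right_eq_Icc]
      have hb := heta j hj hjn
      have hsplit : ((Finset.Icc j n).filter (fun i => x1 i < γ ∨ x2 i < γ)).card
          + ((Finset.Icc j n).filter (fun i => ¬(x1 i < γ ∨ x2 i < γ))).card
          = (Finset.Icc j n).card := Finset.card_filter_add_card_filter_not _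
      have hcard : (Finset.Icc j n).card = n + 1 - j := Nat.card_Icc j n
      have hsum : (∑ i ∈ Finset.Icc j n, e i)
          = 2 * ((Finset.Icc j n).filter (fun i => x1 i < γ ∨ x2 i < γ)).card
            + (-(1/2)) * ((Finset.Icc j n).filter (fun i => ¬(x1 i < γ ∨ x2 i < γ))).card := by
        rw [← Finset.sum_filter_add_sum_filter_not (Finset.Icc j n)
          (fun i => x1 i < γ ∨ x2 i < γ) e]
        congr 1
        · rw [Finset.sum_congr rfl (fun i hi => show e i = 2 by
            rw [he_def]; simp only [if_pos (Finset.mem_filter.mp hi).2])]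
          rw [Finset.sum_const, nsmul_eq_mul]; ring
        · rw [Finset.sum_congr rfl (fun i hi => show e i = -(1/2) by
            rw [he_def]; simp only [if_neg (Finset.mem_filter.mp hi).2])]
          rw [Finset.sum_const, nsmul_eq_mul]; ring
      have hcast : (((Finset.Icc j n).filter (fun i => x1 i < γ ∨ x2 i < γ)).card : ℝ)
          + (((Finset.Icc j n).filter (fun i => ¬(x1 i < γ ∨ x2 i < γ))).card : ℝ)
          = (n:ℝ) + 1 - j := by
        rw [← Nat.cast_add, hsplit, hcard]
        rw [Nat.cast_sub (by omega)]
        push_cast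
        ring
      rw [hsum]
      linarith
    · have hj' : j = n + 1 := by omega
      subst hj'
      rw [Finset.Ico_self, Finset.sum_empty]
      push_cast
      linarith
  -- geometric series
  set r : ℝ := α ^ (-(1:ℝ)/4) with hr_def
  have hr0 : 0 ≤ r := (Real.rpow_pos_of_pos hαpos _).le
  have hr1 : r < 1 := Real.rpow_lt_one_of_one_lt_of_neg hα (by norm_num)
  have hsummable : Summable (fun j : ℕ => r ^ j) := summable_geometric_of_lt_one hr0 hr1
  have hpow : ∀ j : ℕ, α ^ (-(j:ℝ)/4) = r ^ j := by
    intro j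
    rw [hr_def, ← Real.rpow_natCast (α ^ (-(1:ℝ)/4)) j, ← Real.rpow_mul hαpos.le]
    congr 1
    ring
  -- assemble
  have hfinal := key (n+1) (by omega) le_rfl
  have hD1 : |x1 1 - x2 1| ≤ 6 := (abs_sub _ _).trans (by linarith)
  have h1 : |x1 1 - x2 1| * α ^ (∑ i ∈ Finset.Ico 1 (n+1), e i) ≤ 6 * ε := by
    have he1 : (∑ i ∈ Finset.Ico 1 (n+1), e i) ≤ -(n:ℝ)/4 := by
      have := hE 1 le_rfl (by omega)
      have h : -((n:ℝ) + 1 - (1:ℕ)) / 4 = -(n:ℝ)/4 := by push_cast; ring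
      linarith [h ▸ this]
    have h2 : α ^ (∑ i ∈ Finset.Ico 1 (n+1), e i) ≤ α ^ (-(n:ℝ)/4) :=
      Real.rpow_le_rpow_of_exponent_le hα.le he1
    calc |x1 1 - x2 1| * α ^ (∑ i ∈ Finset.Ico 1 (n+1), e i)
        ≤ 6 * α ^ (-(n:ℝ)/4) :=
          mul_le_mul hD1 h2 (Real.rpow_pos_of_pos hαpos _).le (by norm_num)
      _ ≤ 6 * ε := by linarith
  have h2 : (∑ i ∈ Finset.Ico 1 (n+1), α ^ (∑ l ∈ Finset.Ico (i+1) (n+1), e l))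
      ≤ ∑' j : ℕ, α ^ (-(j:ℝ)/4) := by
    calc (∑ i ∈ Finset.Ico 1 (n+1), α ^ (∑ l ∈ Finset.Ico (i+1) (n+1), e l))
        ≤ ∑ i ∈ Finset.Ico 1 (n+1), r ^ (n - i) := by
          refine Finset.sum_le_sum (fun i hi => ?_)
          obtain ⟨hi1, hi2⟩ := Finset.mem_Ico.mp hi
          have hin : i ≤ n := by omega
          have hEi := hE (i+1) (by omega) (by omega)
          have hexp : -((n:ℝ) + 1 - (i+1:ℕ)) / 4 = -(((n - i : ℕ)):ℝ)/4 := by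
            rw [Nat.cast_sub hin]
            push_cast
            ring
          calc α ^ (∑ l ∈ Finset.Ico (i+1) (n+1), e l)
              ≤ α ^ (-(((n - i : ℕ)):ℝ)/4) :=
                Real.rpow_le_rpow_of_exponent_le hα.le (hexp ▸ hEi)
            _ = r ^ (n - i) := hpow (n - i)
      _ = ∑ i ∈ Finset.range n, r ^ i := by
          rw [Finset.sum_Ico_eq_sum_range]
          simp only [Nat.add_sub_cancel]
          rw [← Finset.sum_range_reflect (fun i => r ^ i) n]
          refine Finset.sum_congr rfl (fun i hi => ?_)
          congr 1
          omega
      _ ≤ ∑' j : ℕ, r ^ j :=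
          Summable.sum_le_tsum _ (fun i _ => pow_nonneg hr0 i) hsummable
      _ = ∑' j : ℕ, α ^ (-(j:ℝ)/4) := tsum_congr (fun j => (hpow j).symm)
  have hKε : (0:ℝ) ≤ K * ε := mul_nonneg hK hε.le
  calc |x1 (n+1) - x2 (n+1)|
      ≤ |x1 1 - x2 1| * α ^ (∑ i ∈ Finset.Ico 1 (n+1), e i)
        + K * ε * ∑ i ∈ Finset.Ico 1 (n+1), α ^ (∑ l ∈ Finset.Ico (i+1) (n+1), e l) := hfinal
    _ ≤ 6 * ε + K * ε * (∑' j : ℕ, α ^ (-(j:ℝ)/4)) :=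
        add_le_add h1 (mul_le_mul_of_nonneg_left h2 hKε)
    _ = ε * (6 + K * ∑' j : ℕ, α ^ (-(j:ℝ)/4)) := by ring
end

section
/- Let α satisfy √α ≥ 2K and √α ≥ 64, and let F be differentiable with F'(x) ≥ 2√α for |x| ≤ 2/α. Let (x¹_j), (x²_j) be orbits x^i_{j+1} = F(x^i_j) − c^i_j with |c¹_j − c²_j| ≤ K·α^{−1} for all j, and suppose x²_1 ≥ x¹_1 + 1/α. Then as long as x¹_j ∈ [−1/α,1/α] for all j = 1,…,n, one has x²_{n+1} ≥ x¹_{n+1} + 3/α; in particular x¹_{n+1} ∈ [−1/α,1/α] implies x²_{n+1} ≥ 2/α. -/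
open Set

/-- **Orbit expansion, basic case.** While the reference orbit `x¹` stays in the expanding
region `[-1/α, 1/α]` (where `F' ≥ 2√α`), a second orbit starting at least `1/α` above it and
driven by `K/α`-close terms stays at least `3/α` above it; in particular if
`x¹_{n+1} ∈ [-1/α,1/α]` then `x²_{n+1} ≥ 2/α`. -/
theorem orbit_expansion_basic
    (α K : ℝ)
    (hα64 : 64 ≤ Real.sqrt α) (hαK : 2 * K ≤ Real.sqrt α) (hK : 0 ≤ K)
    (F F' : ℝ → ℝ) (hmono : Monotone F)
    (hderiv : ∀ x : ℝ, HasDerivAt F (F' x) x)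
    (hexp : ∀ x : ℝ, |x| ≤ 2 / α → 2 * Real.sqrt α ≤ F' x)
    (x1 x2 c1 c2 : ℕ → ℝ)
    (hrec1 : ∀ j : ℕ, 1 ≤ j → x1 (j + 1) = F (x1 j) - c1 j)
    (hrec2 : ∀ j : ℕ, 1 ≤ j → x2 (j + 1) = F (x2 j) - c2 j)
    (hc : ∀ j : ℕ, |c1 j - c2 j| ≤ K / α)
    (hstart : x1 1 + 1 / α ≤ x2 1)
    (n : ℕ) (hn : 1 ≤ n)
    (hB : ∀ j : ℕ, 1 ≤ j → j ≤ n → x1 j ∈ Icc (-(1 / α)) (1 / α)) :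
    x1 (n + 1) + 3 / α ≤ x2 (n + 1) ∧
      (x1 (n + 1) ∈ Icc (-(1 / α)) (1 / α) → 2 / α ≤ x2 (n + 1)) := by
  have hs : (0:ℝ) < Real.sqrt α := by linarith
  have hα : (0:ℝ) < α := Real.sqrt_pos.mp hs
  have hαs : Real.sqrt α * Real.sqrt α = α := Real.mul_self_sqrt hα.le
  -- single step lemma
  have step : ∀ j : ℕ, 1 ≤ j → x1 j ∈ Icc (-(1 / α)) (1 / α) →
      x1 j + 1 / α ≤ x2 j → x1 (j + 1) + 3 / α ≤ x2 (j + 1) := by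
    intro j hj hmem hgap
    obtain ⟨hlo, hhi⟩ := hmem
    have hpos : (0:ℝ) < 1 / α := by positivity
    obtain ⟨a, ha⟩ : ∃ a, a = x1 j := ⟨_, rfl⟩
    obtain ⟨b, hb⟩ : ∃ b, b = a + 1 / α := ⟨_, rfl⟩
    rw [← ha] at hlo hhi hgap
    rw [← hb] at hgap
    have hab : a ≤ b := by rw [hb]; linarith
    -- mean value estimate on [a, b]
    have hMVT : 2 * Real.sqrt α * (b - a) ≤ F b - F a := by
      have hconv : Convex ℝ (Icc a b) := convex_Icc a b
      have hcont : ContinuousOn F (Icc a b) := fun x _ =>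
        (hderiv x).continuousAt.continuousWithinAt
      have hdiff : DifferentiableOn ℝ F (interior (Icc a b)) := fun x _ =>
        (hderiv x).differentiableAt.differentiableWithinAt
      have hbound : ∀ x ∈ interior (Icc a b), 2 * Real.sqrt α ≤ deriv F x := by
        intro x hx
        rw [interior_Icc] at hx
        rw [(hderiv x).deriv]
        apply hexp
        rw [abs_le]
        constructor
        · have h2 : -(2 / α) ≤ -(1 / α) := by
            rw [neg_le_neg_iff]
            gcongr
            · norm_num
          linarith [hx.1]
        · have h2 : (1:ℝ) / α + 1 / α = 2 / α := by ring
          have := hx.2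
          simp only [hb] at this
          linarith
      have := hconv.mul_sub_le_image_sub_of_le_deriv hcont hdiff hbound a
        (left_mem_Icc.mpr hab) b (right_mem_Icc.mpr hab) hab
      linarith
    have hba : b - a = 1 / α := by simp [hb]
    have hFb : F b ≤ F (x2 j) := hmono hgap
    have hcK : c2 j - c1 j ≤ K / α := by
      have := (abs_le.mp (hc j)).1
      linarith
    have h1 : x1 (j + 1) = F a - c1 j := by rw [ha]; exact hrec1 j hj
    have h2 : x2 (j + 1) = F (x2 j) - c2 j := hrec2 j hj
    have hnum : 3 / α ≤ 2 * Real.sqrt α * (1 / α) - K / α := by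
      have h3 : (3:ℝ) ≤ 2 * Real.sqrt α - K := by nlinarith
      have : 2 * Real.sqrt α * (1 / α) - K / α = (2 * Real.sqrt α - K) / α := by
        field_simp
      rw [this]
      gcongr
    rw [hba] at hMVT
    rw [h1, h2]
    linarith
  -- induction maintaining the gap
  have key : ∀ j : ℕ, 1 ≤ j → j ≤ n + 1 →
      x1 j + 1 / α ≤ x2 j ∧ (2 ≤ j → x1 j + 3 / α ≤ x2 j) := by
    intro j
    induction j with
    | zero => omega
    | succ m ih =>
      intro _ hmle
      by_cases h0 : m = 0
      · subst h0
        exact ⟨hstart, by omega⟩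
      · have hm1 : 1 ≤ m := by omega
        have hmn : m ≤ n := by omega
        have ihm := ih hm1 (by omega)
        have hst := step m hm1 (hB m hm1 hmn) ihm.1
        have h13 : (1:ℝ) / α ≤ 3 / α := by gcongr; norm_num
        exact ⟨by linarith, fun _ => hst⟩
  have hmain := (key (n + 1) (by omega) le_rfl).2 (by omega)
  refine ⟨hmain, fun hmem => ?_⟩
  have := hmem.1
  have h13 : -(1 / α) + 3 / α = 2 / α := by ring
  linarith
end
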